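/- arXiv:2209.09573 — 10 statements merged into one kernel-verified Lean document; each statement's English description precedes it below -/
import Mathlib

section
/- The dense generalized moment problem and its ideal-sparse reformulation have equal optimal values: val = val^isp. -/
open MvPolynomial MeasureTheory

/-!
Both values are infima of the same set of objective values. A sparse family `(μ k)` yields the
dense measure `∑ k, (μ k).map (padMap (V k))` with the same moments and support in `K`.
Conversely, a point of `K` has as support a clique of `G`, hence lies in the image of `padMap (V k)`
for some maximal clique `V k`. Cutting `K` into disjoint pieces along this cover, the restriction
of a dense measure `ν` to the `k`-th piece is the pushforward along `padMap (V k)` of its image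
under `x ↦ x|V k`, so `ν` is again of the form `∑ k, (μ k).map (padMap (V k))`.
-/

/-- Padding a vector indexed by a clique `V` with zeros outside `V`. -/
noncomputable def padMap {n : ℕ} (V : Finset (Fin n)) (y : ↥V → ℝ) : Fin n → ℝ :=
  fun i => if h : i ∈ V then y ⟨i, h⟩ else 0

section SumMap

variable {ι : Type*} [Fintype ι] {α : ι → Type*} [∀ i, MeasurableSpace (α i)]
  {β : Type*} [MeasurableSpace β] {μ : ∀ i, Measure (α i)} {e : ∀ i, α i → β}

lemma isFiniteMeasure_sum_map_iff (he : ∀ i, Measurable (e i)) :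
    IsFiniteMeasure (∑ i, (μ i).map (e i)) ↔ ∀ i, IsFiniteMeasure (μ i) := by
  simp only [isFiniteMeasure_iff, Measure.finsetSum_apply,
    Measure.map_apply (he _) MeasurableSet.univ, Set.preimage_univ, ENNReal.sum_lt_top,
    Finset.mem_univ, true_implies]

lemma sum_map_apply_eq_zero_iff (he : ∀ i, Measurable (e i)) {s : Set β}
    (hs : MeasurableSet s) :
    (∑ i, (μ i).map (e i)) s = 0 ↔ ∀ i, μ i (e i ⁻¹' s) = 0 := by
  simp only [Measure.finsetSum_apply, Measure.map_apply (he _) hs, Finset.sum_eq_zero_iff,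
    Finset.mem_univ, true_implies]

variable {E : Type*} [NormedAddCommGroup E] {φ : β → E}

lemma integrable_sum_map_iff (he : ∀ i, Measurable (e i)) (hφ : StronglyMeasurable φ) :
    Integrable φ (∑ i, (μ i).map (e i)) ↔ ∀ i, Integrable (φ ∘ e i) (μ i) := by
  simp only [integrable_finsetSum_measure, Finset.mem_univ, true_implies,
    integrable_map_measure hφ.aestronglyMeasurable (he _).aemeasurable]

lemma integral_sum_map [NormedSpace ℝ E] (he : ∀ i, Measurable (e i))
    (hφ : StronglyMeasurable φ) (hint : ∀ i, Integrable (φ ∘ e i) (μ i)) :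
    ∫ x, φ x ∂(∑ i, (μ i).map (e i)) = ∑ i, ∫ y, φ (e i y) ∂(μ i) := by
  rw [integral_finsetSum_measure fun i _ => (integrable_sum_map_iff he hφ).2 hint |>.mono_measure
    (Finset.single_le_sum (fun j _ => Measure.zero_le _) (Finset.mem_univ i))]
  exact Finset.sum_congr rfl fun i _ =>
    integral_map (he i).aemeasurable hφ.aestronglyMeasurable

lemma exists_eq_sum_map [LinearOrder ι] [LocallyFiniteOrderBot ι] (ν : Measure β)
    {B : ι → Set β} (hB : ∀ i, MeasurableSet (B i)) (hν : ∀ᵐ x ∂ν, ∃ i, x ∈ B i)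
    {r : ∀ i, β → α i} (hr : ∀ i, Measurable (r i)) (he : ∀ i, Measurable (e i))
    (her : ∀ i, ∀ x ∈ B i, e i (r i x) = x) :
    ∃ μ : ∀ i, Measure (α i), ν = ∑ i, (μ i).map (e i) := by
  have hA : ∀ i, MeasurableSet (disjointed B i) := fun i => by
    rw [disjointed_eq_inter_compl]
    exact (hB i).inter (.iInter fun j => .iInter fun _ => (hB j).compl)
  have hpiece : ∀ i, ((ν.restrict (disjointed B i)).map (r i)).map (e i) =
      ν.restrict (disjointed B i) := fun i => by
    rw [Measure.map_map (he i) (hr i)]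
    conv_rhs => rw [← Measure.map_id (μ := ν.restrict (disjointed B i))]
    refine Measure.map_congr ((ae_restrict_mem (hA i)).mono fun x hx => ?_)
    exact her i x (disjointed_subset B i hx)
  refine ⟨fun i => (ν.restrict (disjointed B i)).map (r i), ?_⟩
  rw [Finset.sum_congr rfl fun i _ => hpiece i, ← Measure.sum_fintype,
    ← Measure.restrict_iUnion (disjoint_disjointed B) hA, iUnion_disjointed]
  exact (Measure.restrict_eq_self_of_ae_mem (hν.mono fun _ => Set.mem_iUnion.2)).symm

end SumMap

lemma continuous_padMap {n : ℕ} (V : Finset (Fin n)) : Continuous (padMap V) :=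
  continuous_pi fun i => by
    by_cases h : i ∈ V
    · simpa [padMap, h] using continuous_apply (⟨i, h⟩ : ↥V)
    · simpa [padMap, h] using continuous_const

lemma measurable_padMap {n : ℕ} (V : Finset (Fin n)) : Measurable (padMap V) :=
  (continuous_padMap V).measurable

lemma padMap_restrict {n : ℕ} {V : Finset (Fin n)} {x : Fin n → ℝ}
    (hx : ∀ i ∉ V, x i = 0) : padMap V (fun i : ↥V => x i) = x := by
  funext i
  by_cases h : i ∈ V
  · simp [padMap, h]
  · simp [padMap, h, hx i h]

lemma measurableSet_setOf_forall_notMem_eq_zero {σ : Type*} [Countable σ] (s : Set σ) :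
    MeasurableSet {x : σ → ℝ | ∀ i ∉ s, x i = 0} := by
  simp only [Set.ofPred_forall]
  exact .iInter fun i => .iInter fun _ => measurableSet_eq_fun (by fun_prop) measurable_const

lemma measurableSet_setOf_eval_nonneg_and_mul_eq_zero {σ ι : Type*} [Countable σ]
    [Countable ι] (g : ι → MvPolynomial σ ℝ) (G : SimpleGraph σ) :
    MeasurableSet {x : σ → ℝ | (∀ j, 0 ≤ eval x (g j)) ∧
      ∀ i j : σ, i ≠ j → ¬ G.Adj i j → x i * x j = 0} := by
  simp only [Set.ofPred_and, Set.ofPred_forall]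
  exact (MeasurableSet.iInter fun j => measurableSet_le measurable_const
    (continuous_eval _).measurable).inter (.iInter fun i => .iInter fun j => .iInter fun _ =>
      .iInter fun _ => measurableSet_eq_fun (by fun_prop) measurable_const)

namespace SimpleGraph

variable {W R : Type*} [MulZeroClass R] [NoZeroDivisors R] {G : SimpleGraph W} {x : W → R}

lemma isClique_support_of_mul_eq_zero (hx : ∀ i j, i ≠ j → ¬ G.Adj i j → x i * x j = 0) :
    G.IsClique (Function.support x) := fun i hi j hj hij =>
  by_contra fun hadj => mul_ne_zero hi hj (hx i j hij hadj)

lemma exists_support_subset_of_mul_eq_zero [Fintype W] {ι : Type*} {V : ι → Finset W}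
    (hV : ∀ S, Maximal (fun T : Finset W => G.IsClique (T : Set W)) S → ∃ k, V k = S)
    (hx : ∀ i j, i ≠ j → ¬ G.Adj i j → x i * x j = 0) :
    ∃ k, Function.support x ⊆ V k := by
  classical
  obtain ⟨T, hsuppT, hT⟩ := Finite.exists_le_maximal
    (p := fun T : Finset W => G.IsClique (T : Set W)) (a := Finset.univ.filter (x · ≠ 0))
    (by simpa [Function.support] using isClique_support_of_mul_eq_zero hx)
  obtain ⟨k, rfl⟩ := hV T hT
  exact ⟨k, fun i hi => hsuppT (by simpa using hi)⟩

end SimpleGraph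

theorem dense_gmp_eq_ideal_sparse_gmp_general
    (n m N p : ℕ) (G : SimpleGraph (Fin n))
    (g : Fin m → MvPolynomial (Fin n) ℝ)
    (f0 : MvPolynomial (Fin n) ℝ) (f : Fin N → MvPolynomial (Fin n) ℝ) (a : Fin N → ℝ)
    (K : Set (Fin n → ℝ))
    (hK : K = {x | (∀ j, 0 ≤ eval x (g j)) ∧
      ∀ i j : Fin n, i ≠ j → ¬ G.Adj i j → x i * x j = 0})
    (V : Fin p → Finset (Fin n))
    (hall : ∀ S : Finset (Fin n),
      (G.IsClique (S : Set (Fin n)) ∧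
        ∀ S' : Finset (Fin n), G.IsClique (S' : Set (Fin n)) → S ⊆ S' → S' = S) →
      ∃ k, V k = S) :
    sInf {v : EReal | ∃ μ : Measure (Fin n → ℝ), IsFiniteMeasure μ ∧
        μ Kᶜ = 0 ∧
        Integrable (fun x => eval x f0) μ ∧
        (∀ i, Integrable (fun x => eval x (f i)) μ) ∧
        (∀ i, ∫ x, eval x (f i) ∂μ = a i) ∧
        v = ((∫ x, eval x f0 ∂μ : ℝ) : EReal)}
    = sInf {v : EReal | ∃ μ : (k : Fin p) → Measure (↥(V k) → ℝ),
        (∀ k, IsFiniteMeasure (μ k)) ∧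
        (∀ k, μ k {y | padMap (V k) y ∈ K}ᶜ = 0) ∧
        (∀ k, Integrable (fun y => eval (padMap (V k) y) f0) (μ k)) ∧
        (∀ k i, Integrable (fun y => eval (padMap (V k) y) (f i)) (μ k)) ∧
        (∀ i, ∑ k, ∫ y, eval (padMap (V k) y) (f i) ∂(μ k) = a i) ∧
        v = ((∑ k, ∫ y, eval (padMap (V k) y) f0 ∂(μ k) : ℝ) : EReal)} := by
  have hKm : MeasurableSet K := hK ▸ measurableSet_setOf_eval_nonneg_and_mul_eq_zero g G
  have hpad (k : Fin p) : Measurable (padMap (V k)) := measurable_padMap (V k)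
  have heval (q : MvPolynomial (Fin n) ℝ) := (continuous_eval q).stronglyMeasurable
  congr 1
  ext v
  constructor
  · rintro ⟨ν, hfin, hνK, hint0, hinti, hval, rfl⟩
    have hcover : ∀ᵐ x ∂ν, ∃ k, x ∈ {x : Fin n → ℝ | ∀ i ∉ V k, x i = 0} := by
      refine (show ∀ᵐ x ∂ν, x ∈ K from ae_iff.2 hνK).mono fun x hx => ?_
      rw [hK] at hx
      exact (SimpleGraph.exists_support_subset_of_mul_eq_zero
        (fun S hS => hall S ⟨hS.prop, fun S' => hS.eq_of_ge⟩) hx.2).imp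
        fun k => Function.support_subset_iff'.1
    obtain ⟨μ, rfl⟩ := exists_eq_sum_map (e := fun k => padMap (V k)) ν
      (fun k => measurableSet_setOf_forall_notMem_eq_zero _) hcover (r := fun k x i => x i)
      (fun k => by fun_prop) hpad fun k x hx => padMap_restrict hx
    simp only [isFiniteMeasure_sum_map_iff hpad, sum_map_apply_eq_zero_iff hpad hKm.compl,
      integrable_sum_map_iff hpad (heval _)] at hfin hνK hint0 hinti
    simp only [integral_sum_map hpad (heval _) (hinti _)] at hval
    exact ⟨μ, hfin, hνK, hint0, fun k i => hinti i k, hval,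
      by rw [integral_sum_map hpad (heval _) hint0]⟩
  · rintro ⟨μ, hfin, hμK, hint0, hinti, hval, rfl⟩
    refine ⟨∑ k, (μ k).map (padMap (V k)), (isFiniteMeasure_sum_map_iff hpad).2 hfin,
      (sum_map_apply_eq_zero_iff hpad hKm.compl).2 hμK,
      (integrable_sum_map_iff hpad (heval _)).2 hint0,
      fun i => (integrable_sum_map_iff hpad (heval _)).2 (hinti · i), fun i => ?_, ?_⟩
    · rw [integral_sum_map hpad (heval _) (hinti · i), hval]
    · rw [integral_sum_map hpad (heval _) hint0]

/-- The dense generalized moment problem and its ideal-sparse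
reformulation have equal optimal values: `val = val^isp` (computed in `EReal`, so that the
infimum of the empty set is `+∞`).  Here `V 1, …, V p` are the maximal cliques of `G`, the
sparse problem has one measure per clique, living on `ℝ^{V k}`, supported on
`K_k = {y : pad y ∈ K}`, and `f|V_k (y) = f(pad y)`. -/
theorem dense_gmp_eq_ideal_sparse_gmp
    (n m N p : ℕ) (G : SimpleGraph (Fin n))
    (g : Fin m → MvPolynomial (Fin n) ℝ)
    (f0 : MvPolynomial (Fin n) ℝ) (f : Fin N → MvPolynomial (Fin n) ℝ) (a : Fin N → ℝ)
    (K : Set (Fin n → ℝ))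
    (hK : K = {x | (∀ j, 0 ≤ eval x (g j)) ∧
      ∀ i j : Fin n, i ≠ j → ¬ G.Adj i j → x i * x j = 0})
    (V : Fin p → Finset (Fin n))
    (hmax : ∀ k, G.IsClique (V k : Set (Fin n)) ∧
      ∀ S : Finset (Fin n), G.IsClique (S : Set (Fin n)) → V k ⊆ S → S = V k)
    (hall : ∀ S : Finset (Fin n),
      (G.IsClique (S : Set (Fin n)) ∧
        ∀ S' : Finset (Fin n), G.IsClique (S' : Set (Fin n)) → S ⊆ S' → S' = S) →
      ∃ k, V k = S) :
    sInf {v : EReal | ∃ μ : Measure (Fin n → ℝ), IsFiniteMeasure μ ∧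
        μ Kᶜ = 0 ∧
        Integrable (fun x => eval x f0) μ ∧
        (∀ i, Integrable (fun x => eval x (f i)) μ) ∧
        (∀ i, ∫ x, eval x (f i) ∂μ = a i) ∧
        v = ((∫ x, eval x f0 ∂μ : ℝ) : EReal)}
    = sInf {v : EReal | ∃ μ : (k : Fin p) → Measure (↥(V k) → ℝ),
        (∀ k, IsFiniteMeasure (μ k)) ∧
        (∀ k, μ k {y | padMap (V k) y ∈ K}ᶜ = 0) ∧
        (∀ k, Integrable (fun y => eval (padMap (V k) y) f0) (μ k)) ∧
        (∀ k i, Integrable (fun y => eval (padMap (V k) y) (f i)) (μ k)) ∧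
        (∀ i, ∑ k, ∫ y, eval (padMap (V k) y) (f i) ∂(μ k) = a i) ∧
        v = ((∑ k, ∫ y, eval (padMap (V k) y) f0 ∂(μ k) : ℝ) : EReal)} :=
  dense_gmp_eq_ideal_sparse_gmp_general n m N p G g f0 f a K hK V hall
end

section
/- For every integer t ≥ 1 one has ξ_t ≤ ξ^isp_t ≤ val; that is, the level-t ideal-sparse moment bound is at least as large as the level-t dense moment bound, and both lower bound the optimal value of the generalized moment problem. -/
open MvPolynomial MeasureTheory

/-- Substituting `0` for the variables outside `U` (the restriction `f ↦ f|U`). -/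
noncomputable def restrictVars {n : ℕ} (U : Finset (Fin n)) :
    MvPolynomial (Fin n) ℝ →ₐ[ℝ] MvPolynomial (Fin n) ℝ :=
  aeval (fun i => if i ∈ U then (X i : MvPolynomial (Fin n) ℝ) else 0)

/-- Membership in the truncated quadratic module `M(g)_{2t}` generated by `g₀ = 1, g₁, …, gₘ`:
`q = Σ_j σ_j g_j` with `σ_j` sums of squares and `deg (σ_j g_j) ≤ 2t`. -/
def inTruncModule {n m : ℕ} (g : Fin m → MvPolynomial (Fin n) ℝ) (t : ℕ)
    (q : MvPolynomial (Fin n) ℝ) : Prop :=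
  ∃ σ : Fin (m + 1) → MvPolynomial (Fin n) ℝ,
    (∀ j, IsSumSq (σ j)) ∧
    (∀ j, (σ j * (Fin.cons 1 g : Fin (m + 1) → MvPolynomial (Fin n) ℝ) j).totalDegree ≤ 2 * t) ∧
    q = ∑ j, σ j * (Fin.cons 1 g : Fin (m + 1) → MvPolynomial (Fin n) ℝ) j

/-- Membership in the truncated quadratic module `M(g|U)_{2t}`, with sums of squares of
polynomials in the variables `x(U)`. -/
def inTruncModuleRes {n m : ℕ} (U : Finset (Fin n))
    (g : Fin m → MvPolynomial (Fin n) ℝ) (t : ℕ) (q : MvPolynomial (Fin n) ℝ) : Prop :=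
  ∃ σ : Fin (m + 1) → MvPolynomial (Fin n) ℝ,
    (∀ j, IsSumSq (σ j) ∧ restrictVars U (σ j) = σ j) ∧
    (∀ j, (σ j * restrictVars U ((Fin.cons 1 g : Fin (m + 1) → MvPolynomial (Fin n) ℝ) j)).totalDegree ≤ 2 * t) ∧
    q = ∑ j, σ j * restrictVars U ((Fin.cons 1 g : Fin (m + 1) → MvPolynomial (Fin n) ℝ) j)

/-! A feasible point `(L_k)` of the ideal-sparse relaxation glues to the dense functional
`q ↦ Σ_k L_k (q|V_k)`: restriction to `V_k` maps `M(g)_{2t}` into `M(g|V_k)_{2t}`, and it kills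
`x_i x_j` for every non-edge `{i, j}` because no clique contains both. Conversely, the support of a
point of `K` is a clique, so `K` is covered by the sets `{x : Supp x ⊆ V_k}`; disjointifying this
cover splits a feasible measure `μ` into pieces `μ_k` carried by these sets, and `L_k := ∫ · dμ_k`
is feasible for the sparse relaxation with the same objective, since `q|V_k = q` on the support of
`μ_k`. -/

section RestrictVars

variable {n : ℕ} (U : Finset (Fin n))

theorem restrictVars_X (i : Fin n) : restrictVars U (X i) = if i ∈ U then X i else 0 :=
  aeval_X _ _

theorem restrictVars_monomial (s : Fin n →₀ ℕ) (c : ℝ) :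
    restrictVars U (monomial s c) = if ↑s.support ⊆ U then monomial s c else 0 := by
  rw [restrictVars, aeval_monomial, algebraMap_eq]
  split_ifs with hs
  · rw [monomial_eq]
    exact congrArg _ (Finsupp.prod_congr fun i hi => by rw [if_pos (hs hi)])
  · obtain ⟨i, hi, hiU⟩ := Finset.not_subset.1 hs
    rw [Finsupp.prod, Finset.prod_eq_zero hi (by rw [if_neg hiU, zero_pow (by simpa using hi)]),
      mul_zero]

theorem totalDegree_restrictVars_le (q : MvPolynomial (Fin n) ℝ) :
    (restrictVars U q).totalDegree ≤ q.totalDegree := by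
  conv_lhs => rw [q.as_sum, map_sum]
  refine totalDegree_finsetSum_le fun s hs => ?_
  rw [restrictVars_monomial]
  split_ifs
  · exact (totalDegree_monomial_le _ _).trans (le_totalDegree hs)
  · simp

theorem restrictVars_restrictVars (q : MvPolynomial (Fin n) ℝ) :
    restrictVars U (restrictVars U q) = restrictVars U q := by
  suffices (restrictVars U).comp (restrictVars U) = restrictVars U from AlgHom.congr_fun this q
  refine algHom_ext fun i => ?_
  by_cases hi : i ∈ U <;> simp [restrictVars_X, hi]

theorem eval_restrictVars {x : Fin n → ℝ} (hx : ∀ i ∉ U, x i = 0) (q : MvPolynomial (Fin n) ℝ) :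
    eval x (restrictVars U q) = eval x q := by
  rw [← coe_aeval_eq_eval, restrictVars, aeval_eq_bind₁]
  refine (aeval_bind₁ _ _ _).trans (congrArg (aeval · q) (funext fun i => ?_))
  by_cases hi : i ∈ U <;> simp [hi, hx]

theorem restrictVars_mul_X_mul_X {i j : Fin n} (hij : ¬(i ∈ U ∧ j ∈ U))
    (u : MvPolynomial (Fin n) ℝ) : restrictVars U (u * X i * X j) = 0 := by
  by_cases hi : i ∈ U <;> simp_all [restrictVars_X]

theorem SimpleGraph.IsClique.restrictVars_mul_X_mul_X {G : SimpleGraph (Fin n)}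
    (hU : G.IsClique (U : Set (Fin n))) {i j : Fin n} (hij : i ≠ j) (hadj : ¬G.Adj i j)
    (u : MvPolynomial (Fin n) ℝ) : restrictVars U (u * X i * X j) = 0 :=
  _root_.restrictVars_mul_X_mul_X U (fun h => hadj (hU h.1 h.2 hij)) u

end RestrictVars

theorem IsSumSq.map {R S F : Type*} [NonUnitalNonAssocSemiring R] [NonUnitalNonAssocSemiring S]
    [FunLike F R S] [NonUnitalRingHomClass F R S] (f : F) {x : R} (hx : IsSumSq x) :
    IsSumSq (f x) := by
  induction hx with
  | zero => rw [map_zero]; exact .zero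
  | sq_add a _ ih => simpa using IsSumSq.sq_add (f a) ih

section TruncModule

variable {n m : ℕ} {U : Finset (Fin n)} {g : Fin m → MvPolynomial (Fin n) ℝ} {t : ℕ}
  {q : MvPolynomial (Fin n) ℝ}

theorem inTruncModule.restrictVars (hq : inTruncModule g t q) (U : Finset (Fin n)) :
    inTruncModuleRes U g t (restrictVars U q) := by
  obtain ⟨σ, hσ, hdeg, rfl⟩ := hq
  refine ⟨fun j => restrictVars U (σ j),
    fun j => ⟨(hσ j).map _, restrictVars_restrictVars U _⟩, fun j => ?_, by simp [map_sum]⟩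
  rw [← map_mul]
  exact (totalDegree_restrictVars_le U _).trans (hdeg j)

theorem inTruncModuleRes.eval_nonneg (hq : inTruncModuleRes U g t q) {x : Fin n → ℝ}
    (hg : ∀ j, 0 ≤ eval x (g j)) (hx : ∀ i ∉ U, x i = 0) : 0 ≤ eval x q := by
  obtain ⟨σ, hσ, -, rfl⟩ := hq
  rw [map_sum]
  refine Finset.sum_nonneg fun j _ => ?_
  rw [map_mul, eval_restrictVars U hx]
  refine mul_nonneg ((hσ j).1.map (eval x)).nonneg ?_
  induction j using Fin.cases with
  | zero => simp
  | succ j => exact hg j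

end TruncModule

def vanishingOutside {σ : Type*} (U : Finset σ) : Set (σ → ℝ) := {x | ∀ i ∉ U, x i = 0}

theorem measurableSet_vanishingOutside {σ : Type*} [Countable σ] (U : Finset σ) :
    MeasurableSet (vanishingOutside U) := by
  simp only [vanishingOutside, Set.ofPred_forall]
  exact (isClosed_iInter fun i => isClosed_iInter fun _ =>
    isClosed_eq (continuous_apply i) continuous_const).measurableSet

theorem measurableSet_disjointed {α ι : Type*} [MeasurableSpace α] [Countable ι] [Preorder ι]
    [LocallyFiniteOrderBot ι] {s : ι → Set α} (hs : ∀ i, MeasurableSet (s i)) (i : ι) :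
    MeasurableSet (disjointed s i) := by
  rw [disjointed_eq_inter_compl]
  exact (hs i).inter (.iInter fun j => .iInter fun _ => (hs j).compl)

theorem mem_iUnion_vanishingOutside_of_isClique_support {α ι : Type*} [Fintype α]
    {G : SimpleGraph α} {V : ι → Finset α}
    (hall : ∀ S : Finset α, (G.IsClique (S : Set α) ∧
      ∀ S' : Finset α, G.IsClique (S' : Set α) → S ⊆ S' → S' = S) → ∃ k, V k = S)
    {x : α → ℝ} (hx : ∀ i j, i ≠ j → ¬G.Adj i j → x i * x j = 0) :
    x ∈ ⋃ k, vanishingOutside (V k) := by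
  classical
  let T := Finset.univ.filter fun i => x i ≠ 0
  have hT : G.IsClique (T : Set α) := fun i hi j hj hij =>
    by_contra fun hadj => mul_ne_zero (by simpa [T] using hi) (by simpa [T] using hj)
      (hx i j hij hadj)
  obtain ⟨S, hTS, hS⟩ :=
    Finite.exists_le_maximal (p := fun S : Finset α => G.IsClique (S : Set α)) hT
  obtain ⟨k, rfl⟩ := hall S ⟨hS.1, fun S' hS' hSS' => le_antisymm (hS.2 hS' hSS') hSS'⟩
  exact Set.mem_iUnion.2 ⟨k, fun i hi => by_contra fun hxi => hi (hTS (by simpa [T] using hxi))⟩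

section Moments

variable {σ : Type*}

noncomputable def momentFunctional (μ : Measure (σ → ℝ))
    (hμ : ∀ q : MvPolynomial σ ℝ, Integrable (fun x => eval x q) μ) :
    MvPolynomial σ ℝ →ₗ[ℝ] ℝ where
  toFun q := ∫ x, eval x q ∂μ
  map_add' q r := by simp only [map_add]; exact integral_add (hμ q) (hμ r)
  map_smul' c q := by
    simp only [smul_eval, RingHom.id_apply, smul_eq_mul]
    exact integral_const_mul c _

@[simp]
theorem momentFunctional_apply (μ : Measure (σ → ℝ))
    (hμ : ∀ q : MvPolynomial σ ℝ, Integrable (fun x => eval x q) μ) (q : MvPolynomial σ ℝ) :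
    momentFunctional μ hμ q = ∫ x, eval x q ∂μ :=
  rfl

end Moments

theorem sum_setIntegral_restrictVars {ι : Type*} {n : ℕ} [Fintype ι] {μ : Measure (Fin n → ℝ)}
    {V : ι → Finset (Fin n)} {A : ι → Set (Fin n → ℝ)} (hA : ∀ k, MeasurableSet (A k))
    (hdisj : Pairwise (Function.onFun Disjoint A)) (hAV : ∀ k, A k ⊆ vanishingOutside (V k))
    (hcover : ∀ᵐ x ∂μ, x ∈ ⋃ k, A k) {q : MvPolynomial (Fin n) ℝ}
    (hq : Integrable (fun x => eval x q) μ) :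
    ∑ k, ∫ x in A k, eval x (restrictVars (V k) q) ∂μ = ∫ x, eval x q ∂μ :=
  calc ∑ k, ∫ x in A k, eval x (restrictVars (V k) q) ∂μ
      = ∑ k, ∫ x in A k, eval x q ∂μ := Finset.sum_congr rfl fun k _ =>
        setIntegral_congr_fun (hA k) fun x hx => eval_restrictVars _ (hAV k hx) q
    _ = ∫ x in ⋃ k, A k, eval x q ∂μ :=
        (integral_iUnion_fintype hA hdisj fun _ => hq.integrableOn).symm
    _ = ∫ x, eval x q ∂μ := by rw [Measure.restrict_eq_self_of_ae_mem hcover]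

theorem dense_le_ideal_sparse_le_val_general
    (n m N p t : ℕ) (G : SimpleGraph (Fin n))
    (g : Fin m → MvPolynomial (Fin n) ℝ)
    (f0 : MvPolynomial (Fin n) ℝ) (f : Fin N → MvPolynomial (Fin n) ℝ) (a : Fin N → ℝ)
    (K : Set (Fin n → ℝ))
    (hK : K = {x | (∀ j, 0 ≤ eval x (g j)) ∧
      ∀ i j : Fin n, i ≠ j → ¬ G.Adj i j → x i * x j = 0})
    (V : Fin p → Finset (Fin n))
    (hmax : ∀ k, G.IsClique (V k : Set (Fin n)) ∧
      ∀ S : Finset (Fin n), G.IsClique (S : Set (Fin n)) → V k ⊆ S → S = V k)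
    (hall : ∀ S : Finset (Fin n),
      (G.IsClique (S : Set (Fin n)) ∧
        ∀ S' : Finset (Fin n), G.IsClique (S' : Set (Fin n)) → S ⊆ S' → S' = S) →
      ∃ k, V k = S)
    (xit xisp val : EReal)
    (hxit : xit = sInf {v : EReal | ∃ L : MvPolynomial (Fin n) ℝ →ₗ[ℝ] ℝ,
      (∀ i, L (f i) = a i) ∧
      (∀ q, inTruncModule g t q → 0 ≤ L q) ∧
      (∀ i j : Fin n, i ≠ j → ¬ G.Adj i j →
        ∀ u : MvPolynomial (Fin n) ℝ, u.totalDegree ≤ 2 * t - 2 → L (u * X i * X j) = 0) ∧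
      v = ((L f0 : ℝ) : EReal)})
    (hxisp : xisp = sInf {v : EReal | ∃ L : Fin p → (MvPolynomial (Fin n) ℝ →ₗ[ℝ] ℝ),
      (∀ i, ∑ k, L k (restrictVars (V k) (f i)) = a i) ∧
      (∀ k q, inTruncModuleRes (V k) g t q → 0 ≤ L k q) ∧
      v = ((∑ k, L k (restrictVars (V k) f0) : ℝ) : EReal)})
    (hval : val = sInf {v : EReal | ∃ μ : Measure (Fin n → ℝ), IsFiniteMeasure μ ∧
      μ Kᶜ = 0 ∧
      (∀ q : MvPolynomial (Fin n) ℝ, Integrable (fun x => eval x q) μ) ∧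
      (∀ i, ∫ x, eval x (f i) ∂μ = a i) ∧
      v = ((∫ x, eval x f0 ∂μ : ℝ) : EReal)}) :
    xit ≤ xisp ∧ xisp ≤ val := by
  constructor
  · rw [hxit, hxisp]
    refine sInf_le_sInf ?_
    rintro v ⟨L, hLf, hLpos, rfl⟩
    refine ⟨∑ k, (L k).comp (restrictVars (V k)).toLinearMap, by simpa using hLf,
      fun q hq => ?_, fun i j hij hadj u _ => ?_, by simp⟩
    · simpa using Finset.sum_nonneg fun k _ => hLpos k _ (hq.restrictVars (V k))
    · simp [(hmax _).1.restrictVars_mul_X_mul_X _ hij hadj]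
  · rw [hxisp, hval]
    refine sInf_le_sInf ?_
    rintro v ⟨μ, -, hKc, hint, hfi, rfl⟩
    have hμK : ∀ᵐ x ∂μ, x ∈ K := mem_ae_iff.2 hKc
    rw [hK] at hμK
    have hS k : MeasurableSet (vanishingOutside (V k)) := measurableSet_vanishingOutside _
    have hcover : ∀ᵐ x ∂μ, x ∈ ⋃ k, disjointed (fun k => vanishingOutside (V k)) k := by
      rw [iUnion_disjointed]
      exact hμK.mono fun x hx => mem_iUnion_vanishingOutside_of_isClique_support hall hx.2
    have hsum q := sum_setIntegral_restrictVars (measurableSet_disjointed hS)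
      (disjoint_disjointed _) (disjointed_subset _) hcover (hint q)
    refine ⟨fun k => momentFunctional (μ.restrict (disjointed (fun k => vanishingOutside (V k)) k))
      fun q => (hint q).restrict, fun i => by simpa [hsum] using hfi i, fun k q hq => ?_,
      by simp [hsum]⟩
    exact setIntegral_nonneg_ae (measurableSet_disjointed hS k)
      (hμK.mono fun x hx hxA => hq.eval_nonneg hx.1 (disjointed_subset _ k hxA))

/-- For every integer `t ≥ 1` one has `ξ_t ≤ ξ^isp_t ≤ val`: the level-`t`
ideal-sparse moment bound is at least as large as the level-`t` dense moment bound, and both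
lower bound the optimal value of the generalized moment problem (all values in `EReal`). -/
theorem dense_le_ideal_sparse_le_val
    (n m N p t : ℕ) (ht : 1 ≤ t) (G : SimpleGraph (Fin n))
    (g : Fin m → MvPolynomial (Fin n) ℝ)
    (f0 : MvPolynomial (Fin n) ℝ) (f : Fin N → MvPolynomial (Fin n) ℝ) (a : Fin N → ℝ)
    (K : Set (Fin n → ℝ))
    (hK : K = {x | (∀ j, 0 ≤ eval x (g j)) ∧
      ∀ i j : Fin n, i ≠ j → ¬ G.Adj i j → x i * x j = 0})
    (V : Fin p → Finset (Fin n))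
    (hmax : ∀ k, G.IsClique (V k : Set (Fin n)) ∧
      ∀ S : Finset (Fin n), G.IsClique (S : Set (Fin n)) → V k ⊆ S → S = V k)
    (hall : ∀ S : Finset (Fin n),
      (G.IsClique (S : Set (Fin n)) ∧
        ∀ S' : Finset (Fin n), G.IsClique (S' : Set (Fin n)) → S ⊆ S' → S' = S) →
      ∃ k, V k = S)
    (xit xisp val : EReal)
    (hxit : xit = sInf {v : EReal | ∃ L : MvPolynomial (Fin n) ℝ →ₗ[ℝ] ℝ,
      (∀ i, L (f i) = a i) ∧
      (∀ q, inTruncModule g t q → 0 ≤ L q) ∧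
      (∀ i j : Fin n, i ≠ j → ¬ G.Adj i j →
        ∀ u : MvPolynomial (Fin n) ℝ, u.totalDegree ≤ 2 * t - 2 → L (u * X i * X j) = 0) ∧
      v = ((L f0 : ℝ) : EReal)})
    (hxisp : xisp = sInf {v : EReal | ∃ L : Fin p → (MvPolynomial (Fin n) ℝ →ₗ[ℝ] ℝ),
      (∀ i, ∑ k, L k (restrictVars (V k) (f i)) = a i) ∧
      (∀ k q, inTruncModuleRes (V k) g t q → 0 ≤ L k q) ∧
      v = ((∑ k, L k (restrictVars (V k) f0) : ℝ) : EReal)})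
    (hval : val = sInf {v : EReal | ∃ μ : Measure (Fin n → ℝ), IsFiniteMeasure μ ∧
      μ Kᶜ = 0 ∧
      (∀ q : MvPolynomial (Fin n) ℝ, Integrable (fun x => eval x q) μ) ∧
      (∀ i, ∫ x, eval x (f i) ∂μ = a i) ∧
      v = ((∫ x, eval x f0 ∂μ : ℝ) : EReal)}) :
    xit ≤ xisp ∧ xisp ≤ val :=
  dense_le_ideal_sparse_le_val_general n m N p t G g f0 f a K hK V hmax hall xit xisp val hxit hxisp
    hval
end

section
/- Let Ĝ = (V, Ê) be a graph containing G as a subgraph, with maximal cliques V̂_1,…,V̂_{p̂}, and for t ∈ ℕ set I_{k,t} = {α ∈ ℕⁿ_t : Supp(α) ⊆ V̂_k}. If a linear functional L on ℝ[x]_{2t} vanishes on the truncated ideal I_{E,2t}, then L(x^α x^β) = 0 for any α, β ∈ ℕⁿ_t such that there is no k ∈ [p̂] with both α ∈ I_{k,t} and β ∈ I_{k,t}. -/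
/-! The support of `α + β` lies in no maximal clique of `Ĝ`, hence is not a clique of `Ĝ`:
it contains a non-edge `{i, j}` of `Ĝ`, a fortiori of `G`. Then `x^α x^β = x^γ x_i x_j` with
`|γ| = |α| + |β| - 2 ≤ 2t - 2`, which lies in `I_{E,2t}`. -/

open MvPolynomial

theorem SimpleGraph.exists_ne_not_adj_of_forall_maximal_not_subset {V : Type*} [Finite V]
    {G : SimpleGraph V} {S : Set V} (hS : ∀ M, Maximal G.IsClique M → ¬ S ⊆ M) :
    ∃ i ∈ S, ∃ j ∈ S, i ≠ j ∧ ¬ G.Adj i j := by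
  by_contra! hclique
  obtain ⟨M, hSM, hM⟩ := Finite.exists_le_maximal (p := G.IsClique) hclique
  exact hS M hM hSM

theorem Finsupp.single_add_single_le_of_ne {σ : Type*} {d : σ →₀ ℕ} {i j : σ} (hij : i ≠ j)
    (hi : d i ≠ 0) (hj : d j ≠ 0) : single i 1 + single j 1 ≤ d := by
  classical
  intro a
  simp only [Finsupp.add_apply, Finsupp.single_apply]
  split_ifs <;> grind

theorem Finsupp.degree_tsub_add_degree {σ : Type*} {d e : σ →₀ ℕ} (h : e ≤ d) :
    (d - e).degree + e.degree = d.degree := by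
  rw [← map_add, tsub_add_cancel_of_le h]

theorem MvPolynomial.monomial_eq_monomial_tsub_mul_X_mul_X {σ R : Type*} [CommSemiring R]
    {d : σ →₀ ℕ} {i j : σ} (h : Finsupp.single i 1 + Finsupp.single j 1 ≤ d) (c : R) :
    monomial d c = monomial (d - (Finsupp.single i 1 + Finsupp.single j 1)) c * X i * X j := by
  rw [X, X, monomial_mul, monomial_mul, mul_one, mul_one, add_assoc, tsub_add_cancel_of_le h]

theorem vanishing_off_clique_indexed_entries_general
    (n phat t : ℕ) (G Ghat : SimpleGraph (Fin n)) (hGG : G ≤ Ghat)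
    (Vhat : Fin phat → Set (Fin n))
    (hall : ∀ S : Set (Fin n),
      (Ghat.IsClique S ∧ ∀ S' : Set (Fin n), Ghat.IsClique S' → S ⊆ S' → S' = S) →
      ∃ k, Vhat k = S)
    (L : MvPolynomial (Fin n) ℝ →ₗ[ℝ] ℝ)
    -- `L` vanishes on the truncated ideal `I_{E,2t}` generated by the monomials `x i * x j`
    -- over the nonedges `{i,j}` of `G`, with multipliers of degree at most `2t - 2`
    (hL : ∀ i j : Fin n, i ≠ j → ¬ G.Adj i j →
      ∀ u : MvPolynomial (Fin n) ℝ, u.totalDegree ≤ 2 * t - 2 → L (u * X i * X j) = 0)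
    (α β : Fin n →₀ ℕ) (hα : (∑ i, α i) ≤ t) (hβ : (∑ i, β i) ≤ t)
    (h : ¬ ∃ k, (∀ i, α i ≠ 0 → i ∈ Vhat k) ∧ (∀ i, β i ≠ 0 → i ∈ Vhat k)) :
    L (monomial α 1 * monomial β 1) = 0 := by
  have hsupp : ∀ M, Maximal Ghat.IsClique M → ¬ ↑(α + β).support ⊆ M := by
    intro M hM hsub
    obtain ⟨k, rfl⟩ := hall M ⟨hM.prop, fun S' hS' hMS' => hM.eq_of_ge hS' hMS'⟩
    exact h ⟨k, fun i hi => hsub (by simp [hi]), fun i hi => hsub (by simp [hi])⟩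
  obtain ⟨i, hi, j, hj, hij, hnadj⟩ :=
    SimpleGraph.exists_ne_not_adj_of_forall_maximal_not_subset hsupp
  have hle := Finsupp.single_add_single_le_of_ne hij (Finsupp.mem_support_iff.1 hi)
    (Finsupp.mem_support_iff.1 hj)
  rw [monomial_mul, one_mul, monomial_eq_monomial_tsub_mul_X_mul_X hle]
  refine hL i j hij (fun hG => hnadj (hGG hG)) _ ((totalDegree_monomial_le _ _).trans ?_)
  have hdeg := Finsupp.degree_tsub_add_degree hle
  rw [map_add, map_add, Finsupp.degree_single, Finsupp.degree_single] at hdeg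
  rw [← Finsupp.degree_eq_sum] at hα hβ
  change Finsupp.degree _ ≤ _
  omega

/-- Let `Ĝ` be a graph containing `G` as a subgraph, with maximal cliques
`V̂ 1, …, V̂ p̂`, and for `t ∈ ℕ` set `I k t = {α ∈ ℕⁿ_t : Supp α ⊆ V̂ k}`. If a linear
functional `L` on `ℝ[x]_{2t}` vanishes on the truncated ideal `I_{E,2t}`, then
`L(x^α x^β) = 0` for any `α, β ∈ ℕⁿ_t` such that there is no `k` with both `α` and `β`
in `I k t`. -/
theorem vanishing_off_clique_indexed_entries
    (n phat t : ℕ) (G Ghat : SimpleGraph (Fin n)) (hGG : G ≤ Ghat)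
    (Vhat : Fin phat → Set (Fin n))
    (hmax : ∀ k, Ghat.IsClique (Vhat k) ∧
      ∀ S : Set (Fin n), Ghat.IsClique S → Vhat k ⊆ S → S = Vhat k)
    (hall : ∀ S : Set (Fin n),
      (Ghat.IsClique S ∧ ∀ S' : Set (Fin n), Ghat.IsClique S' → S ⊆ S' → S' = S) →
      ∃ k, Vhat k = S)
    (L : MvPolynomial (Fin n) ℝ →ₗ[ℝ] ℝ)
    -- `L` vanishes on the truncated ideal `I_{E,2t}` generated by the monomials `x i * x j`
    -- over the nonedges `{i,j}` of `G`, with multipliers of degree at most `2t - 2`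
    (hL : ∀ i j : Fin n, i ≠ j → ¬ G.Adj i j →
      ∀ u : MvPolynomial (Fin n) ℝ, u.totalDegree ≤ 2 * t - 2 → L (u * X i * X j) = 0)
    (α β : Fin n →₀ ℕ) (hα : (∑ i, α i) ≤ t) (hβ : (∑ i, β i) ≤ t)
    (h : ¬ ∃ k, (∀ i, α i ≠ 0 → i ∈ Vhat k) ∧ (∀ i, β i ≠ 0 → i ∈ Vhat k)) :
    L (monomial α 1 * monomial β 1) = 0 :=
  vanishing_off_clique_indexed_entries_general n phat t G Ghat hGG Vhat hall L hL α β hα hβ h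
end

section
/- Let V̂_1,…,V̂_{p̂} be subsets of [n] satisfying the running intersection property: for every k ∈ {2,…,p̂} there exists j ∈ {1,…,k−1} such that V̂_k ∩ (V̂_1 ∪ … ∪ V̂_{k−1}) ⊆ V̂_j. Then for any t ∈ ℕ the index sets I_{k,t} = {α ∈ ℕⁿ_t : Supp(α) ⊆ V̂_k} (k ∈ [p̂]) also satisfy the running intersection property: for every q ∈ {2,…,p̂} there exists k ∈ {1,…,q−1} such that I_{q,t} ∩ (I_{1,t} ∪ … ∪ I_{q−1,t}) ⊆ I_{k,t}. -/
/-- If the sets `V̂ 1, …, V̂ p̂ ⊆ [n]` satisfy the running intersection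
property, then for any `t ∈ ℕ` the index sets
`I k t = {α ∈ ℕⁿ_t : Supp α ⊆ V̂ k}` also satisfy the running intersection property. -/
theorem rip_for_monomial_index_sets
    (n phat t : ℕ) (Vhat : Fin phat → Set (Fin n))
    (I : Fin phat → Set (Fin n →₀ ℕ))
    (hI : ∀ k, I k = {α : Fin n →₀ ℕ | (∑ i, α i) ≤ t ∧ ∀ i, α i ≠ 0 → i ∈ Vhat k})
    (hRIP : ∀ k : Fin phat, (k : ℕ) ≠ 0 →
      ∃ j < k, Vhat k ∩ (⋃ i, ⋃ (_ : i < k), Vhat i) ⊆ Vhat j) :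
    ∀ q : Fin phat, (q : ℕ) ≠ 0 →
      ∃ k < q, I q ∩ (⋃ j, ⋃ (_ : j < q), I j) ⊆ I k := by
  intro q hq
  obtain ⟨j, hjq, hsub⟩ := hRIP q hq
  refine ⟨j, hjq, ?_⟩
  rintro α ⟨hαq, hαU⟩
  simp only [Set.mem_iUnion] at hαU
  obtain ⟨i, hiq, hαi⟩ := hαU
  rw [hI q] at hαq
  rw [hI i] at hαi
  rw [hI j]
  refine ⟨hαq.1, fun x hx => ?_⟩
  apply hsub
  exact ⟨hαq.2 x hx, Set.mem_iUnion.2 ⟨i, Set.mem_iUnion.2 ⟨hiq, hαi.2 x hx⟩⟩⟩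
end

section
/- Let A ∈ S^n be a symmetric nonnegative matrix with A_ii > 0 for all i. Then τ_cp(A) equals the optimal value of the generalized moment problem inf{μ(ℝⁿ) : μ a finite positive Borel measure on ℝⁿ, ∫ x_i x_j dμ = A_ij for all i,j ∈ [n], Supp(μ) ⊆ K_A} (both sides being +∞ exactly when A is not completely positive). -/
/-!
For `x ≥ 0` the conditions defining `K_A` say exactly that `x xᵀ ≤ A` entrywise and
`A - x xᵀ ⪰ 0`, so `K_A` is the compact set of admissible atoms in the definition of `τ_cp`.
A convex combination `∑ wₖ xₖ xₖᵀ = A / λ` of such atoms yields the atomic measure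
`∑ λ wₖ δ_{xₖ}` of mass `λ` with moment matrix `A`. Conversely, if `μ ≠ 0` is supported on `K_A`
with moment matrix `A`, then `A / μ(ℝⁿ)` is the average of `x xᵀ` over `μ`, which lies in the
convex hull of the compact set `{x xᵀ : x ∈ K_A}`; that hull is closed by Carathéodory's theorem.
The zero measure occurs only for `A = 0`, where both sides vanish.
-/

open Matrix MeasureTheory Set
open scoped ENNReal

section ConvexHull

variable {E : Type*} [AddCommGroup E] [Module ℝ E] [FiniteDimensional ℝ E]

theorem convexHull_eq_image_stdSimplex_prod (s : Set E) :
    convexHull ℝ s =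
      (fun p : (Fin (Module.finrank ℝ E + 1) → ℝ) × (Fin (Module.finrank ℝ E + 1) → E) =>
        ∑ i, p.1 i • p.2 i) '' (stdSimplex ℝ _ ×ˢ univ.pi fun _ => s) := by
  refine Subset.antisymm (fun x hx => ?_) ?_
  · obtain ⟨x₀, hx₀⟩ : s.Nonempty := convexHull_nonempty_iff.mp ⟨x, hx⟩
    obtain ⟨ι, _, z, w, hzs, hz, hw0, hw1, rfl⟩ := eq_pos_convex_span_of_mem_convexHull hx
    obtain ⟨e⟩ : Nonempty (ι ↪ Fin (Module.finrank ℝ E + 1)) := by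
      rw [Function.Embedding.nonempty_iff_card_le, Fintype.card_fin]
      exact hz.card_le_finrank_succ.trans
        (Nat.succ_le_succ (Submodule.finrank_le (vectorSpan ℝ (range z))))
    classical
    -- pad the Carathéodory combination to `finrank + 1` terms with weight-zero copies of `x₀`
    set w' := Function.extend e w 0
    set z' := Function.extend e z fun _ => x₀
    have hw' : ∀ j ∉ range e, w' j = 0 := fun j hj => Function.extend_apply' _ _ _ hj
    refine ⟨(w', z'), ⟨⟨fun j => ?_, ?_⟩, fun j _ => ?_⟩, ?_⟩
    · rcases em (j ∈ range e) with ⟨i, rfl⟩ | hj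
      · simpa only [w', e.injective.extend_apply] using (hw0 i).le
      · exact (hw' j hj).ge
    · exact (Fintype.sum_of_injective e e.injective w w' hw'
        fun i => (e.injective.extend_apply _ _ i).symm).symm.trans hw1
    · rcases em (j ∈ range e) with ⟨i, rfl⟩ | hj
      · simpa only [z', e.injective.extend_apply] using hzs (mem_range_self i)
      · simpa only [z', Function.extend_apply' _ _ _ hj] using hx₀
    · refine (Fintype.sum_of_injective e e.injective _ _ (fun j hj => by simp [hw' j hj])
        fun i => ?_).symm
      simp only [w', z', e.injective.extend_apply]
  · rintro _ ⟨⟨w, z⟩, ⟨⟨hw0, hw1⟩, hz⟩, rfl⟩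
    exact mem_convexHull_of_exists_fintype w z hw0 hw1 (fun i => hz i (mem_univ i)) rfl

variable [TopologicalSpace E] [ContinuousAdd E] [ContinuousSMul ℝ E]

theorem IsCompact.convexHull {s : Set E} (hs : IsCompact s) : IsCompact (convexHull ℝ s) := by
  rw [convexHull_eq_image_stdSimplex_prod]
  exact ((isCompact_stdSimplex ℝ _).prod (isCompact_univ_pi fun _ => hs)).image <|
    continuous_finsetSum _ fun i _ =>
      ((continuous_apply i).comp continuous_fst).smul ((continuous_apply i).comp continuous_snd)

end ConvexHull

theorem average_mem_convexHull {α E : Type*} [MeasurableSpace α] {μ : Measure α}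
    [IsFiniteMeasure μ] [NeZero μ] [NormedAddCommGroup E] [NormedSpace ℝ E]
    [FiniteDimensional ℝ E] {s : Set E} (hs : IsCompact s) {f : α → E}
    (hfs : ∀ᵐ x ∂μ, f x ∈ s) (hf : Integrable f μ) : ⨍ x, f x ∂μ ∈ convexHull ℝ s :=
  (convex_convexHull ℝ s).average_mem hs.convexHull.isClosed
    (hfs.mono fun _ hx => subset_convexHull ℝ s hx) hf

theorem ENNReal.sInf_ofReal_eq_zero_of_forall_pos {P : ℝ → Prop} (hP : ∀ r, 0 < r → P r) :
    sInf {v : ℝ≥0∞ | ∃ r : ℝ, 0 < r ∧ P r ∧ v = ENNReal.ofReal r} = 0 := by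
  refine sInf_eq_bot.mpr fun b hb => ?_
  obtain ⟨r, -, hr, hrb⟩ := ENNReal.lt_iff_exists_real_btwn.mp hb
  have hr : 0 < r := ENNReal.ofReal_pos.mp hr
  exact ⟨_, ⟨r, hr, hP r hr, rfl⟩, hrb⟩

section AtomicMeasure

variable {α ι : Type*} [MeasurableSpace α] [Fintype ι]

noncomputable def atomicMeasure (c : ι → ℝ) (y : ι → α) : Measure α :=
  ∑ i, ENNReal.ofReal (c i) • Measure.dirac (y i)

variable {c : ι → ℝ} {y : ι → α}

theorem atomicMeasure_univ (hc : ∀ i, 0 ≤ c i) :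
    atomicMeasure c y univ = ENNReal.ofReal (∑ i, c i) := by
  simp [atomicMeasure, ENNReal.ofReal_sum_of_nonneg fun i _ => hc i]

instance : IsFiniteMeasure (atomicMeasure c y) :=
  ⟨by simp [atomicMeasure, ENNReal.sum_lt_top]⟩

theorem atomicMeasure_compl_eq_zero [MeasurableSingletonClass α] {s : Set α}
    (hy : ∀ i, y i ∈ s) : atomicMeasure c y sᶜ = 0 := by
  simp [atomicMeasure, hy]

theorem integrable_atomicMeasure [MeasurableSingletonClass α] {E : Type*}
    [NormedAddCommGroup E] (f : α → E) : Integrable f (atomicMeasure c y) :=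
  integrable_finsetSum_measure.mpr fun i _ =>
    (integrable_dirac (by finiteness)).smul_measure ENNReal.ofReal_ne_top

theorem integral_atomicMeasure [MeasurableSingletonClass α] {E : Type*} [NormedAddCommGroup E]
    [NormedSpace ℝ E] [CompleteSpace E] (hc : ∀ i, 0 ≤ c i) (f : α → E) :
    ∫ x, f x ∂atomicMeasure c y = ∑ i, c i • f (y i) := by
  rw [atomicMeasure, integral_finsetSum_measure fun i _ =>
    (integrable_dirac (by finiteness)).smul_measure ENNReal.ofReal_ne_top]
  simp [integral_smul_measure, integral_dirac, ENNReal.toReal_ofReal (hc _)]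

end AtomicMeasure

section Moments

variable {ι : Type*} [Fintype ι] {S : Set (ι → ℝ)} {A : Matrix ι ι ℝ}

theorem exists_measure_moments_of_inv_smul_mem_convexHull {r : ℝ} (hr : 0 < r)
    (hA : r⁻¹ • A ∈ convexHull ℝ ((fun x => vecMulVec x x) '' S)) :
    ∃ μ : Measure (ι → ℝ), IsFiniteMeasure μ ∧ μ Sᶜ = 0 ∧
      (∀ i j, Integrable (fun x => x i * x j) μ) ∧
      (∀ i j, ∫ x, x i * x j ∂μ = A i j) ∧ μ univ = ENNReal.ofReal r := by
  obtain ⟨κ, _, w, B, hw0, hw1, hB, hwB⟩ := mem_convexHull_iff_exists_fintype.mp hA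
  choose y hyS hyB using hB
  have hc : ∀ k, 0 ≤ r * w k := fun k => mul_nonneg hr.le (hw0 k)
  refine ⟨atomicMeasure (fun k => r * w k) y, inferInstance, atomicMeasure_compl_eq_zero hyS,
    fun i j => integrable_atomicMeasure _, fun i j => ?_, ?_⟩
  · have hij : ∑ k, w k * (y k i * y k j) = r⁻¹ * A i j := by
      simpa [Matrix.sum_apply, ← hyB, vecMulVec_apply] using congr_fun₂ hwB i j
    rw [integral_atomicMeasure hc]
    simp only [smul_eq_mul, mul_assoc, ← Finset.mul_sum, hij]
    field_simp
  · rw [atomicMeasure_univ hc, ← Finset.mul_sum, hw1, mul_one]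

theorem inv_smul_mem_convexHull_of_moments (hS : IsCompact S) {μ : Measure (ι → ℝ)}
    [IsFiniteMeasure μ] [NeZero μ] (hμS : μ Sᶜ = 0)
    (hint : ∀ i j, Integrable (fun x => x i * x j) μ)
    (hmom : ∀ i j, ∫ x, x i * x j ∂μ = A i j) :
    (μ.real univ)⁻¹ • A ∈ convexHull ℝ ((fun x => vecMulVec x x) '' S) := by
  set f : (ι → ℝ) → ι → ι → ℝ := fun x i j => x i * x j
  have hf : Continuous f := continuous_pi fun i => continuous_pi fun j =>
    (continuous_apply i).mul (continuous_apply j)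
  have hfS : ∀ᵐ x ∂μ, f x ∈ f '' S :=
    (show ∀ᵐ x ∂μ, x ∈ S from mem_ae_iff.mpr hμS).mono fun x hx => mem_image_of_mem f hx
  have hfint : Integrable f μ := Integrable.of_eval fun i => Integrable.of_eval fun j => hint i j
  have havg : (μ.real univ)⁻¹ • A = Matrix.of (⨍ x, f x ∂μ) := by
    ext i j
    rw [average_eq, of_apply, Pi.smul_apply, Pi.smul_apply, eval_integral hfint.eval,
      eval_integral (hint i), hmom]
    rfl
  rw [havg]
  exact average_mem_convexHull (hS.image hf) hfS hfint

end Moments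

open scoped ComplexOrder in
theorem Matrix.isClosed_setOf_posSemidef {n 𝕜 : Type*} [Fintype n] [RCLike 𝕜] :
    IsClosed {M : Matrix n n 𝕜 | M.PosSemidef} := by
  simp only [posSemidef_iff_dotProduct_mulVec, ofPred_and, ofPred_forall]
  exact (isClosed_eq continuous_id.matrix_conjTranspose continuous_id).inter <|
    isClosed_iInter fun x => isClosed_le continuous_const <|
      continuous_const.dotProduct (continuous_id.matrix_mulVec continuous_const)

section CpAtoms

variable {ι : Type*}

def cpAtoms (A : Matrix ι ι ℝ) : Set (ι → ℝ) :=
  {x | (∀ i, 0 ≤ x i) ∧ (A - vecMulVec x x).PosSemidef ∧ ∀ i j, x i * x j ≤ A i j}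

variable {A : Matrix ι ι ℝ}

theorem image_vecMulVec_cpAtoms :
    (fun x => vecMulVec x x) '' cpAtoms A = {B | ∃ x : ι → ℝ, (∀ i, 0 ≤ x i) ∧
      (A - vecMulVec x x).PosSemidef ∧ (∀ i j, x i * x j ≤ A i j) ∧ B = vecMulVec x x} := by
  ext B
  simp [cpAtoms, eq_comm, and_assoc]

theorem mul_self_le_of_posSemidef_sub_vecMulVec {x : ι → ℝ}
    (h : (A - vecMulVec x x).PosSemidef) (i : ι) : x i * x i ≤ A i i := by
  simpa [sub_nonneg, vecMulVec_apply] using h.diag_nonneg (i := i)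

theorem setOf_KA_eq_cpAtoms :
    {x : ι → ℝ | (∀ i, 0 ≤ Real.sqrt (A i i) * x i - (x i) ^ 2) ∧
      (∀ i j, i ≠ j → A i j ≠ 0 → 0 ≤ A i j - x i * x j) ∧
      (∀ i j, i ≠ j → A i j = 0 → x i * x j = 0) ∧
      (A - vecMulVec x x).PosSemidef} = cpAtoms A := by
  ext x
  constructor
  · rintro ⟨hsq, hE, hEc, hpsd⟩
    have hx0 : ∀ i, 0 ≤ x i := fun i => by
      by_contra! hneg
      nlinarith [hsq i, mul_nonpos_of_nonneg_of_nonpos (Real.sqrt_nonneg (A i i)) hneg.le]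
    refine ⟨hx0, hpsd, fun i j => ?_⟩
    rcases eq_or_ne i j with rfl | hij
    · exact mul_self_le_of_posSemidef_sub_vecMulVec hpsd i
    rcases eq_or_ne (A i j) 0 with hA | hA
    · rw [hEc i j hij hA, hA]
    · linarith [hE i j hij hA]
  · rintro ⟨hx0, hpsd, hle⟩
    refine ⟨fun i => ?_, fun i j _ _ => sub_nonneg.mpr (hle i j),
      fun i j _ hA => le_antisymm (hA ▸ hle i j) (mul_nonneg (hx0 i) (hx0 j)), hpsd⟩
    have : x i ≤ Real.sqrt (A i i) := Real.le_sqrt_of_sq_le (by simpa [sq] using hle i i)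
    nlinarith [hx0 i]

theorem isClosed_cpAtoms [Fintype ι] : IsClosed (cpAtoms A) := by
  simp only [cpAtoms, ofPred_and, ofPred_forall]
  exact (isClosed_iInter fun i => isClosed_le continuous_const (continuous_apply i)).inter <|
    (isClosed_setOf_posSemidef.preimage
      (continuous_const.sub (continuous_id.matrix_vecMulVec continuous_id))).inter <|
    isClosed_iInter fun i => isClosed_iInter fun j =>
      isClosed_le ((continuous_apply i).mul (continuous_apply j)) continuous_const

theorem cpAtoms_subset_Icc : cpAtoms A ⊆ Icc 0 fun i => Real.sqrt (A i i) :=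
  fun x ⟨hx0, _, hle⟩ => ⟨hx0, fun i => Real.le_sqrt_of_sq_le (by simpa [sq] using hle i i)⟩

theorem isCompact_cpAtoms [Fintype ι] : IsCompact (cpAtoms A) :=
  isCompact_Icc.of_isClosed_subset isClosed_cpAtoms cpAtoms_subset_Icc

theorem zero_mem_cpAtoms_zero : (0 : ι → ℝ) ∈ cpAtoms (0 : Matrix ι ι ℝ) :=
  ⟨fun _ => le_rfl, by simpa using PosSemidef.zero, fun _ _ => by simp⟩

end CpAtoms

theorem tau_cp_eq_gmp_value_general
    (n : ℕ) (A : Matrix (Fin n) (Fin n) ℝ)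
    (K : Set (Fin n → ℝ))
    (hK : K = {x | (∀ i, 0 ≤ Real.sqrt (A i i) * x i - (x i) ^ 2) ∧
        (∀ i j : Fin n, i ≠ j → A i j ≠ 0 → 0 ≤ A i j - x i * x j) ∧
        (∀ i j : Fin n, i ≠ j → A i j = 0 → x i * x j = 0) ∧
        (A - vecMulVec x x).PosSemidef}) :
    sInf {v : ℝ≥0∞ | ∃ lam : ℝ, 0 < lam ∧
        lam⁻¹ • A ∈ convexHull ℝ {B : Matrix (Fin n) (Fin n) ℝ |
          ∃ x : Fin n → ℝ, (∀ i, 0 ≤ x i) ∧ (A - vecMulVec x x).PosSemidef ∧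
            (∀ i j, x i * x j ≤ A i j) ∧ B = vecMulVec x x} ∧
        v = ENNReal.ofReal lam}
    = sInf {v : ℝ≥0∞ | ∃ μ : Measure (Fin n → ℝ), IsFiniteMeasure μ ∧
        μ Kᶜ = 0 ∧
        (∀ i j : Fin n, Integrable (fun x => x i * x j) μ) ∧
        (∀ i j : Fin n, ∫ x, x i * x j ∂μ = A i j) ∧
        v = μ Set.univ} := by
  rw [hK, setOf_KA_eq_cpAtoms, ← image_vecMulVec_cpAtoms]
  refine le_antisymm (le_sInf ?_) (le_sInf ?_)
  · rintro _ ⟨μ, hμ, hμS, hint, hmom, rfl⟩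
    rcases eq_zero_or_neZero μ with rfl | hμ0
    · obtain rfl : A = 0 := by ext i j; simpa using (hmom i j).symm
      rw [Measure.coe_zero, Pi.zero_apply]
      refine (ENNReal.sInf_ofReal_eq_zero_of_forall_pos fun r _ => ?_).le
      simpa using subset_convexHull ℝ _
        (mem_image_of_mem (fun x : Fin n → ℝ => vecMulVec x x) zero_mem_cpAtoms_zero)
    · exact sInf_le ⟨μ.real univ, measureReal_univ_pos,
        inv_smul_mem_convexHull_of_moments isCompact_cpAtoms hμS hint hmom,
        (ofReal_measureReal).symm⟩
  · rintro _ ⟨r, hr, hA, rfl⟩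
    obtain ⟨μ, hμ, hμS, hint, hmom, hμr⟩ :=
      exists_measure_moments_of_inv_smul_mem_convexHull hr hA
    exact sInf_le ⟨μ, hμ, hμS, hint, hmom, hμr.symm⟩

/-- For a symmetric nonnegative matrix `A` with positive diagonal, the
parameter `τ_cp(A)` equals the optimal value of the generalized moment problem
`inf {μ(ℝⁿ) : ∫ xᵢxⱼ dμ = Aᵢⱼ (i,j ∈ [n]), Supp(μ) ⊆ K_A}` (both computed in `ℝ≥0∞`,
so both sides are `+∞` exactly when `A` is not completely positive). -/
theorem tau_cp_eq_gmp_value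
    (n : ℕ) (A : Matrix (Fin n) (Fin n) ℝ) (hsymm : A.IsSymm)
    (hnn : ∀ i j, 0 ≤ A i j) (hdiag : ∀ i, 0 < A i i)
    (K : Set (Fin n → ℝ))
    (hK : K = {x | (∀ i, 0 ≤ Real.sqrt (A i i) * x i - (x i) ^ 2) ∧
        (∀ i j : Fin n, i ≠ j → A i j ≠ 0 → 0 ≤ A i j - x i * x j) ∧
        (∀ i j : Fin n, i ≠ j → A i j = 0 → x i * x j = 0) ∧
        (A - vecMulVec x x).PosSemidef}) :
    sInf {v : ℝ≥0∞ | ∃ lam : ℝ, 0 < lam ∧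
        lam⁻¹ • A ∈ convexHull ℝ {B : Matrix (Fin n) (Fin n) ℝ |
          ∃ x : Fin n → ℝ, (∀ i, 0 ≤ x i) ∧ (A - vecMulVec x x).PosSemidef ∧
            (∀ i j, x i * x j ≤ A i j) ∧ B = vecMulVec x x} ∧
        v = ENNReal.ofReal lam}
    = sInf {v : ℝ≥0∞ | ∃ μ : Measure (Fin n → ℝ), IsFiniteMeasure μ ∧
        μ Kᶜ = 0 ∧
        (∀ i j : Fin n, Integrable (fun x => x i * x j) μ) ∧
        (∀ i j : Fin n, ∫ x, x i * x j ∂μ = A i j) ∧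
        v = μ Set.univ} :=
  tau_cp_eq_gmp_value_general n A K hK
end

section
/- Let A ∈ S^n be a symmetric nonnegative matrix with A_ii > 0 for all i. Then the level-1 weak ideal-sparse bound satisfies ξ^{cp,wisp}_1(A) ≥ c_frac(G_A), the fractional edge clique-cover number of the support graph of A. -/
open MvPolynomial

/-- For a symmetric nonnegative matrix `A` with positive diagonal, the
level-1 weak ideal-sparse bound satisfies `ξ^{cp,wisp}_1(A) ≥ c_frac(G_A)`, the fractional
edge clique-cover number of the support graph of `A` (both computed as infima in `EReal`).
Positive semidefiniteness of the level-1 moment matrix of `L k` is expressed as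
`L k (q²) ≥ 0` for every polynomial `q` of degree `≤ 1` in the variables `x(V k)`. -/
theorem weak_ideal_sparse_ge_frac_clique_cover
    (n p : ℕ) (A : Matrix (Fin n) (Fin n) ℝ) (hsymm : A.IsSymm)
    (hnn : ∀ i j, 0 ≤ A i j) (hdiag : ∀ i, 0 < A i i)
    (G : SimpleGraph (Fin n)) (hG : ∀ i j, G.Adj i j ↔ i ≠ j ∧ A i j ≠ 0)
    (V : Fin p → Finset (Fin n))
    (hmax : ∀ k, G.IsClique (V k : Set (Fin n)) ∧
      ∀ S : Finset (Fin n), G.IsClique (S : Set (Fin n)) → V k ⊆ S → S = V k)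
    (hall : ∀ S : Finset (Fin n),
      (G.IsClique (S : Set (Fin n)) ∧
        ∀ S' : Finset (Fin n), G.IsClique (S' : Set (Fin n)) → S ⊆ S' → S' = S) →
      ∃ k, V k = S) :
    sInf {v : EReal | ∃ x : Fin p → ℝ, (∀ k, 0 ≤ x k) ∧
        (∀ i j : Fin n, i ≠ j → A i j ≠ 0 →
          1 ≤ ∑ k ∈ Finset.univ.filter (fun k => i ∈ V k ∧ j ∈ V k), x k) ∧
        v = ((∑ k, x k : ℝ) : EReal)}
    ≤ sInf {v : EReal | ∃ L : Fin p → (MvPolynomial (Fin n) ℝ →ₗ[ℝ] ℝ),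
        (∀ i j : Fin n, ∑ k ∈ Finset.univ.filter (fun k => i ∈ V k ∧ j ∈ V k),
          L k (X i * X j) = A i j) ∧
        (∀ k, ∀ q : MvPolynomial (Fin n) ℝ, q.totalDegree ≤ 1 → q.vars ⊆ V k →
          0 ≤ L k (q * q)) ∧
        (∀ k, ∀ i ∈ V k, 0 ≤ L k (C (Real.sqrt (A i i)) * X i - X i ^ 2)) ∧
        (∀ k, ∀ i ∈ V k, ∀ j ∈ V k, i ≠ j → 0 ≤ L k (C (A i j) - X i * X j)) ∧
        (∀ k, Matrix.PosSemidef (Matrix.of (fun i j : ↥(V k) =>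
          L k 1 * A (i : Fin n) (j : Fin n) - L k (X (i : Fin n) * X (j : Fin n))))) ∧
        v = ((∑ k, L k 1 : ℝ) : EReal)} := by
  refine le_sInf fun v hv => ?_
  obtain ⟨L, h1, h2, h3, h4, h5, rfl⟩ := hv
  apply sInf_le
  refine ⟨fun k => L k 1, fun k => ?_, fun i j hij hA => ?_, rfl⟩
  · have := h2 k 1 (by simp) (by simp)
    simpa using this
  · have hApos : 0 < A i j := lt_of_le_of_ne (hnn i j) (Ne.symm hA)
    have key : ∀ k ∈ Finset.univ.filter (fun k => i ∈ V k ∧ j ∈ V k),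
        L k (X i * X j) ≤ A i j * L k 1 := by
      intro k hk
      simp only [Finset.mem_filter] at hk
      have h := h4 k i hk.2.1 j hk.2.2 hij
      have hC : (C (A i j) : MvPolynomial (Fin n) ℝ) = (A i j) • 1 := by
        simp [MvPolynomial.smul_eq_C_mul]
      rw [map_sub, hC, map_smul] at h
      simp only [smul_eq_mul] at h
      linarith
    have hsum : A i j ≤ A i j * ∑ k ∈ Finset.univ.filter (fun k => i ∈ V k ∧ j ∈ V k),
        L k 1 := by
      calc A i j = ∑ k ∈ Finset.univ.filter (fun k => i ∈ V k ∧ j ∈ V k),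
            L k (X i * X j) := (h1 i j).symm
        _ ≤ ∑ k ∈ Finset.univ.filter (fun k => i ∈ V k ∧ j ∈ V k),
            A i j * L k 1 := Finset.sum_le_sum key
        _ = _ := by rw [Finset.mul_sum]
    nlinarith [hsum, hApos]
end

section
/- Let M ∈ ℝ^{m×n} be a nonnegative matrix. Then the level-1 ideal-sparse bound satisfies ξ^{+,isp}_1(M) ≥ bc_frac(G^M), the fractional edge biclique-cover number of the bipartite support graph of M. -/
open MvPolynomial

/-- For a nonnegative matrix `M ∈ ℝ^{m×n}`, the level-1 ideal-sparse
bound satisfies `ξ^{+,isp}_1(M) ≥ bc_frac(G^M)`, the fractional edge biclique-cover number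
of the bipartite support graph of `M` (both computed as infima in `EReal`).  The `m+n`
vertices/variables are indexed by `Fin m ⊕ Fin n`, and `V 1, …, V p` are the vertex sets of
the maximal bicliques of `G^M`. -/
theorem ideal_sparse_ge_frac_biclique_cover
    (m n p : ℕ) (M : Matrix (Fin m) (Fin n) ℝ) (hnn : ∀ i j, 0 ≤ M i j)
    (Mmax : ℝ) (hMmax : IsGreatest {r : ℝ | ∃ i j, M i j = r} Mmax)
    (V : Fin p → Finset (Fin m ⊕ Fin n))
    -- each `V k` is the vertex set of a maximal biclique of `G^M`
    (hmax : ∀ k, ∃ (A : Finset (Fin m)) (B : Finset (Fin n)),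
      A.Nonempty ∧ B.Nonempty ∧ (∀ i ∈ A, ∀ j ∈ B, M i j ≠ 0) ∧
      (∀ (A' : Finset (Fin m)) (B' : Finset (Fin n)), A'.Nonempty → B'.Nonempty →
        (∀ i ∈ A', ∀ j ∈ B', M i j ≠ 0) → A ⊆ A' → B ⊆ B' → A' = A ∧ B' = B) ∧
      V k = A.image Sum.inl ∪ B.image Sum.inr)
    -- every maximal biclique of `G^M` appears among the `V k`
    (hall : ∀ (A : Finset (Fin m)) (B : Finset (Fin n)),
      A.Nonempty → B.Nonempty → (∀ i ∈ A, ∀ j ∈ B, M i j ≠ 0) →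
      (∀ (A' : Finset (Fin m)) (B' : Finset (Fin n)), A'.Nonempty → B'.Nonempty →
        (∀ i ∈ A', ∀ j ∈ B', M i j ≠ 0) → A ⊆ A' → B ⊆ B' → A' = A ∧ B' = B) →
      ∃ k, V k = A.image Sum.inl ∪ B.image Sum.inr) :
    sInf {v : EReal | ∃ x : Fin p → ℝ, (∀ k, 0 ≤ x k) ∧
        (∀ (i : Fin m) (j : Fin n), M i j ≠ 0 →
          1 ≤ ∑ k ∈ Finset.univ.filter
            (fun k => Sum.inl i ∈ V k ∧ Sum.inr j ∈ V k), x k) ∧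
        v = ((∑ k, x k : ℝ) : EReal)}
    ≤ sInf {v : EReal | ∃ L : Fin p → (MvPolynomial (Fin m ⊕ Fin n) ℝ →ₗ[ℝ] ℝ),
        (∀ (i : Fin m) (j : Fin n), ∑ k ∈ Finset.univ.filter
            (fun k => Sum.inl i ∈ V k ∧ Sum.inr j ∈ V k),
          L k (X (Sum.inl i) * X (Sum.inr j)) = M i j) ∧
        (∀ k, ∀ q : MvPolynomial (Fin m ⊕ Fin n) ℝ, q.totalDegree ≤ 1 → q.vars ⊆ V k →
          0 ≤ L k (q * q)) ∧
        (∀ k, ∀ v ∈ V k, 0 ≤ L k (C (Real.sqrt Mmax) * X v - X v ^ 2)) ∧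
        (∀ k, ∀ (i : Fin m) (j : Fin n), Sum.inl i ∈ V k → Sum.inr j ∈ V k →
          0 ≤ L k (C (M i j) - X (Sum.inl i) * X (Sum.inr j))) ∧
        v = ((∑ k, L k 1 : ℝ) : EReal)} := by
  apply sInf_le_sInf
  rintro v ⟨L, h1, h2, h3, h4, rfl⟩
  refine ⟨fun k => L k 1, ?_, ?_, rfl⟩
  · intro k
    have := h2 k 1 (by simp) (by simp)
    simpa using this
  · intro i j hMij
    have hMpos : 0 < M i j := lt_of_le_of_ne (hnn i j) (Ne.symm hMij)
    have key : M i j ≤ M i j * ∑ k ∈ Finset.univ.filter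
        (fun k => Sum.inl i ∈ V k ∧ Sum.inr j ∈ V k), L k 1 := by
      rw [Finset.mul_sum]
      calc M i j = _ := (h1 i j).symm
        _ ≤ _ := ?_
      refine Finset.sum_le_sum ?_
      intro k hk
      simp only [Finset.mem_filter] at hk
      have := h4 k i j hk.2.1 hk.2.2
      have hC : (L k) (C (M i j)) = M i j * L k 1 := by
        have : (C (M i j) : MvPolynomial (Fin m ⊕ Fin n) ℝ) = M i j • 1 := by
          rw [MvPolynomial.smul_eq_C_mul, mul_one]
        rw [this, map_smul, smul_eq_mul]
      rw [map_sub, hC, sub_nonneg] at this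
      exact this
    exact le_of_mul_le_mul_left (by simpa [mul_one] using key) hMpos
end

section
/- Let m ≥ 1, n = 2m, and A = [[(m+1)I_m, J_m],[J_m, (m+1)I_m]] ∈ S^n, where I_m is the m×m identity and J_m the m×m all-ones matrix. Then ξ^{cp}_1(A) ≤ 2m(m+1)/(2m+1) < m+1. -/
open Matrix MvPolynomial

/-!
With `e_k`, `f_l` the unit vectors of the two blocks,
`A = ∑_{k,l} (e_k + f_l)(e_k + f_l)ᵀ + ∑_i e_i e_iᵀ` is a Gram factorization of `A` by `m² + 2m`
nonnegative vectors `y`. For nonzero scalars `r`, the atomic measure with atoms `y_k / r_k` and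
weights `r_k²` has second moments `A` whatever `r` is, a positive semidefinite moment matrix like
every measure, first moments `∑_k r_k y_k` and mass `∑_k r_k²`. Among the `r` constant on each of
the two families, mass is minimal subject to all first moments being `√(m + 1)` at
`r = 2√(m + 1)/(2m + 1)` on the first family and `r = √(m + 1)/(2m + 1)` on the second, where the
mass is `2m(m + 1)/(2m + 1)`.
-/

noncomputable section

variable {ι κ : Type*} [Fintype κ]

def momentMatrix (L : MvPolynomial ι ℝ →ₗ[ℝ] ℝ) : Matrix (Option ι) (Option ι) ℝ :=
  of fun α β =>
    match α, β with
    | none, none => L 1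
    | none, some i => L (X i)
    | some i, none => L (X i)
    | some i, some j => L (X i * X j)

def atomicFunctional (w : κ → ℝ) (x : κ → ι → ℝ) : MvPolynomial ι ℝ →ₗ[ℝ] ℝ :=
  ∑ k, w k • (aeval (x k)).toLinearMap

variable (w : κ → ℝ) (x : κ → ι → ℝ)

lemma atomicFunctional_apply (p : MvPolynomial ι ℝ) :
    atomicFunctional w x p = ∑ k, w k * aeval (x k) p := by
  simp [atomicFunctional]

lemma momentMatrix_atomicFunctional :
    momentMatrix (atomicFunctional w x) =
      ∑ k, w k • vecMulVec (fun o => o.elim 1 (x k)) (fun o => o.elim 1 (x k)) := by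
  ext (_ | i) (_ | j) <;>
    simp [momentMatrix, atomicFunctional_apply, Matrix.sum_apply, vecMulVec_apply]

lemma posSemidef_momentMatrix_atomicFunctional [Finite ι] (hw : ∀ k, 0 ≤ w k) :
    (momentMatrix (atomicFunctional w x)).PosSemidef := by
  rw [momentMatrix_atomicFunctional]
  exact posSemidef_sum _ fun k _ => (posSemidef_vecMulVec_self_star _).smul (hw k)

section Gram

variable (r : κ → ℝ) (y : κ → ι → ℝ)

abbrev gramFunctional : MvPolynomial ι ℝ →ₗ[ℝ] ℝ :=
  atomicFunctional (fun k => r k ^ 2) (fun k => (r k)⁻¹ • y k)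

lemma gramFunctional_one : gramFunctional r y 1 = ∑ k, r k ^ 2 := by
  simp [atomicFunctional_apply]

variable {r}

lemma gramFunctional_X (hr : ∀ k, r k ≠ 0) (i : ι) :
    gramFunctional r y (X i) = ∑ k, r k * y k i := by
  simp only [atomicFunctional_apply, aeval_X, Pi.smul_apply, smul_eq_mul]
  exact Finset.sum_congr rfl fun k _ => by field_simp [hr k]

lemma gramFunctional_X_mul_X (hr : ∀ k, r k ≠ 0) (i j : ι) :
    gramFunctional r y (X i * X j) = ∑ k, y k i * y k j := by
  simp only [atomicFunctional_apply, map_mul, aeval_X, Pi.smul_apply, smul_eq_mul]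
  exact Finset.sum_congr rfl fun k _ => by field_simp [hr k]

end Gram

def bipartiteCpFactor (m : ℕ) : (Fin m × Fin m) ⊕ (Fin m ⊕ Fin m) → Fin m ⊕ Fin m → ℝ
  | .inl (k, l) => Sum.elim (Pi.single k 1) (Pi.single l 1)
  | .inr i => Pi.single i 1

lemma sum_bipartiteCpFactor_mul (m : ℕ) (i j : Fin m ⊕ Fin m) :
    ∑ k, bipartiteCpFactor m k i * bipartiteCpFactor m k j =
      fromBlocks (((m : ℝ) + 1) • 1) (of fun _ _ => 1)
        (of fun _ _ => 1) (((m : ℝ) + 1) • 1) i j := by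
  rcases i with a | a <;> rcases j with b | b <;> by_cases hab : a = b <;>
    simp [bipartiteCpFactor, Fintype.sum_sum_type, Fintype.sum_prod_type, Pi.single_apply, hab]

lemma sum_mul_bipartiteCpFactor (m : ℕ) (a b : ℝ) (i : Fin m ⊕ Fin m) :
    ∑ k, Sum.elim (fun _ => a) (fun _ => b) k * bipartiteCpFactor m k i = m * a + b := by
  rcases i with i | i
  · simp [bipartiteCpFactor, Fintype.sum_sum_type, Fintype.sum_prod_type_right, Pi.single_apply]
  · simp [bipartiteCpFactor, Fintype.sum_sum_type, Fintype.sum_prod_type, Pi.single_apply]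

end

/-- For `n = 2m` and `A = [[(m+1)Iₘ, Jₘ],[Jₘ, (m+1)Iₘ]]`, the level-1
dense moment bound for the cp-rank satisfies `ξ^cp_1(A) ≤ 2m(m+1)/(2m+1) < m+1`. -/
theorem dense_cp_bound_small_on_bipartite_example
    (m : ℕ) (hm : 1 ≤ m)
    (A : Matrix (Fin m ⊕ Fin m) (Fin m ⊕ Fin m) ℝ)
    (hA : A = fromBlocks (((m : ℝ) + 1) • 1) (of fun _ _ => 1)
      (of fun _ _ => 1) (((m : ℝ) + 1) • 1)) :
    sInf {v : EReal | ∃ L : MvPolynomial (Fin m ⊕ Fin m) ℝ →ₗ[ℝ] ℝ,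
        1 ≤ L 1 ∧
        (∀ i, Real.sqrt (A i i) ≤ L (X i)) ∧
        (∀ i j, L (X i * X j) = A i j) ∧
        Matrix.PosSemidef (Matrix.of (fun α β =>
            match α, β with
            | none, none => L 1
            | none, some i => L (X i)
            | some i, none => L (X i)
            | some i, some j => L (X i * X j)) :
          Matrix (Option (Fin m ⊕ Fin m)) (Option (Fin m ⊕ Fin m)) ℝ) ∧
        v = ((L 1 : ℝ) : EReal)}
      ≤ ((2 * (m : ℝ) * ((m : ℝ) + 1) / (2 * (m : ℝ) + 1) : ℝ) : EReal) ∧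
    2 * (m : ℝ) * ((m : ℝ) + 1) / (2 * (m : ℝ) + 1) < (m : ℝ) + 1 := by
  have hm' : (1 : ℝ) ≤ m := by exact_mod_cast hm
  have hc : (0 : ℝ) < 2 * m + 1 := by linarith
  set s := √((m : ℝ) + 1)
  have hs : 0 < s := Real.sqrt_pos.mpr (by positivity)
  have hs2 : s ^ 2 = m + 1 := Real.sq_sqrt (by positivity)
  set r : (Fin m × Fin m) ⊕ (Fin m ⊕ Fin m) → ℝ :=
    Sum.elim (fun _ => 2 * s / (2 * m + 1)) (fun _ => s / (2 * m + 1))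
  have hr : ∀ k, r k ≠ 0 := by rintro (_ | _) <;> simp [r, hs.ne', hc.ne']
  set L := gramFunctional r (bipartiteCpFactor m)
  have hL1 : L 1 = 2 * m * (m + 1) / (2 * m + 1) := by
    simp only [L, r, gramFunctional_one, Fintype.sum_sum_type, Sum.elim_inl, Sum.elim_inr,
      Finset.sum_const, Finset.card_univ, Fintype.card_prod, Fintype.card_sum, Fintype.card_fin,
      nsmul_eq_mul]
    push_cast
    field_simp
    rw [hs2]
    ring
  have hLX : ∀ i, L (X i) = s := fun i => by
    rw [gramFunctional_X _ hr, sum_mul_bipartiteCpFactor]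
    field_simp
  refine ⟨sInf_le ⟨L, ?_, fun i => ?_, fun i j => ?_, ?_, by rw [hL1]⟩, ?_⟩
  · rw [hL1, le_div_iff₀ hc]
    nlinarith
  · rw [hLX, hA]
    rcases i with _ | _ <;> simp [s]
  · rw [gramFunctional_X_mul_X _ hr, sum_bipartiteCpFactor_mul, hA]
  · have hL : (momentMatrix L).PosSemidef :=
      posSemidef_momentMatrix_atomicFunctional _ _ fun k => sq_nonneg (r k)
    -- the statement's `match` compiles to its own matcher, equal to `momentMatrix`'s only entrywise
    convert hL using 1
    ext (_ | i) (_ | j) <;> rfl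
  · rw [div_lt_iff₀ hc]
    nlinarith
end

section
/- Let m ≥ 1, n = 2m, and A = [[(m+1)I_m, J_m],[J_m, (m+1)I_m]] ∈ S^n. The support graph G_A is the complete bipartite graph K_{m,m}, whose maximal cliques are its m² edges; the fractional edge clique-cover number satisfies c_frac(G_A) = m², and consequently ξ^{cp,wisp}_1(A) ≥ m². -/
/-!
The support graph of `A` is `K_{m,m}`, whose maximal cliques are its edges `{i, j'}`. Hence the
cliques `V k` are indexed by a surjection `g` onto the `m²` edges, and the constraint of either
program at an edge only involves the fiber of `g` over that edge. Summing over these disjoint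
fibers bounds both programs below by `m²`; for `c_frac` the bound is attained by giving one chosen
clique per edge weight one. For `ξ`, the fiber sum of `L k (x_i x_j')` is `A_ij' = 1`, and the
constraint `L k (A_ij' - x_i x_j') ≥ 0` bounds each of its terms by `L k 1`.
-/

open MvPolynomial Matrix Finset Function

theorem Finset.pair_inl_inr_subset_pair_iff {α β : Type*} [DecidableEq α] [DecidableEq β]
    {a a' : α} {b b' : β} :
    ({Sum.inl a, Sum.inr b} : Finset (α ⊕ β)) ⊆ {Sum.inl a', Sum.inr b'} ↔ a = a' ∧ b = b' := by
  simp [insert_subset_iff]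

namespace SimpleGraph

variable {α β : Type*}

theorem completeBipartiteGraph_adj_iff_fromBlocks_ne_zero {R : Type*} [Semiring R] [Nontrivial R]
    [DecidableEq α] [DecidableEq β] (c : R) (u v : α ⊕ β) :
    (completeBipartiteGraph α β).Adj u v ↔
      u ≠ v ∧ fromBlocks (c • (1 : Matrix α α R)) (of fun _ _ => 1) (of fun _ _ => 1)
        (c • (1 : Matrix β β R)) u v ≠ 0 := by
  rcases u with a | b <;> rcases v with a' | b' <;> simp +contextual [one_apply]

theorem isClique_completeBipartiteGraph_iff [Nonempty α] [Nonempty β] {s : Set (α ⊕ β)} :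
    (completeBipartiteGraph α β).IsClique s ↔ ∃ a b, s ⊆ {Sum.inl a, Sum.inr b} := by
  constructor
  · intro hs
    have left : ∃ a, ∀ x, Sum.inl x ∈ s → x = a := by
      by_cases h : ∃ x, Sum.inl x ∈ s
      · obtain ⟨a, ha⟩ := h
        exact ⟨a, fun x hx => by_contra fun hxa => by simpa using hs hx ha (by simpa using hxa)⟩
      · exact ⟨Classical.arbitrary α, fun x hx => (h ⟨x, hx⟩).elim⟩
    have right : ∃ b, ∀ y, Sum.inr y ∈ s → y = b := by
      by_cases h : ∃ y, Sum.inr y ∈ s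
      · obtain ⟨b, hb⟩ := h
        exact ⟨b, fun y hy => by_contra fun hyb => by simpa using hs hy hb (by simpa using hyb)⟩
      · exact ⟨Classical.arbitrary β, fun y hy => (h ⟨y, hy⟩).elim⟩
    obtain ⟨a, ha⟩ := left
    obtain ⟨b, hb⟩ := right
    refine ⟨a, b, fun u hu => ?_⟩
    rcases u with x | y
    · simp [ha x hu]
    · simp [hb y hu]
  · rintro ⟨a, b, hs⟩
    exact (isClique_pair.2 fun _ => by simp).subset hs

theorem maximal_isClique_completeBipartiteGraph_iff [Nonempty α] [Nonempty β]
    [DecidableEq α] [DecidableEq β] {S : Finset (α ⊕ β)} :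
    Maximal (fun S : Finset (α ⊕ β) => (completeBipartiteGraph α β).IsClique (S : Set (α ⊕ β))) S ↔
      ∃ a b, S = {Sum.inl a, Sum.inr b} := by
  have pair_isClique (a : α) (b : β) :
      (completeBipartiteGraph α β).IsClique
        (({Sum.inl a, Sum.inr b} : Finset (α ⊕ β)) : Set (α ⊕ β)) :=
    isClique_completeBipartiteGraph_iff.2 ⟨a, b, by simp⟩
  constructor
  · intro hS
    obtain ⟨a, b, hsub⟩ := isClique_completeBipartiteGraph_iff.1 hS.prop
    exact ⟨a, b, hS.eq_of_le (pair_isClique a b) (by simpa [← Finset.coe_subset] using hsub)⟩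
  · rintro ⟨a, b, rfl⟩
    refine ⟨pair_isClique a b, fun T hT hsub => ?_⟩
    obtain ⟨a', b', hT'⟩ := isClique_completeBipartiteGraph_iff.1 hT
    rw [← Finset.coe_pair, Finset.coe_subset] at hT'
    obtain ⟨rfl, rfl⟩ := pair_inl_inr_subset_pair_iff.1 (hsub.trans hT')
    exact hT'

end SimpleGraph

section FiberCover

variable {ι κ : Type*} [Fintype ι] [Fintype κ] [DecidableEq κ]

theorem card_le_sum_of_one_le_sum_fiber (g : ι → κ) {y : ι → ℝ}
    (hy : ∀ c, 1 ≤ ∑ k with g k = c, y k) : (Fintype.card κ : ℝ) ≤ ∑ k, y k := by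
  rw [← Finset.sum_fiberwise univ g y]
  simpa using Finset.sum_le_sum fun c (_ : c ∈ univ) => hy c

theorem exists_fiber_cover_sum_eq_card {g : ι → κ} (hg : Surjective g) :
    ∃ x : ι → ℝ, (∀ k, 0 ≤ x k) ∧ (∀ c, 1 ≤ ∑ k with g k = c, x k) ∧
      ∑ k, x k = Fintype.card κ := by
  classical
  obtain ⟨s, hs⟩ := hg.hasRightInverse
  refine ⟨fun k => (#{c | s c = k} : ℝ), fun k => by positivity, fun c => ?_, ?_⟩
  · have hsc : s c ∈ ({k | g k = c} : Finset ι) := by simp [hs c]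
    calc (1 : ℝ) ≤ #{c' | s c' = s c} := by
          exact_mod_cast Finset.card_pos.2 ⟨c, by simp⟩
      _ ≤ _ := Finset.single_le_sum (f := fun k => (#{c | s c = k} : ℝ))
          (fun k _ => by positivity) hsc
  · rw [← Nat.cast_sum, ← Finset.card_eq_sum_card_fiberwise (f := s) (s := univ) (t := univ)
      (fun c _ => mem_coe.2 (mem_univ (s c))), card_univ]

theorem sInf_fiber_cover_eq_card {g : ι → κ} (hg : Surjective g) :
    sInf {v : EReal | ∃ x : ι → ℝ, (∀ k, 0 ≤ x k) ∧ (∀ c, 1 ≤ ∑ k with g k = c, x k) ∧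
      v = ((∑ k, x k : ℝ) : EReal)} = ((Fintype.card κ : ℝ) : EReal) := by
  refine IsLeast.csInf_eq ⟨?_, ?_⟩
  · obtain ⟨x, hx0, hx, hsum⟩ := exists_fiber_cover_sum_eq_card hg
    exact ⟨x, hx0, hx, by rw [hsum]⟩
  · rintro _ ⟨x, -, hx, rfl⟩
    exact EReal.coe_le_coe_iff.2 (card_le_sum_of_one_le_sum_fiber g hx)

end FiberCover

theorem MvPolynomial.linearMap_le_mul_map_one_of_map_C_sub_nonneg {σ R : Type*} [CommRing R]
    [PartialOrder R] [IsOrderedAddMonoid R] (L : MvPolynomial σ R →ₗ[R] R) {a : R}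
    {q : MvPolynomial σ R} (h : 0 ≤ L (C a - q)) : L q ≤ a * L 1 := by
  rwa [map_sub, C_eq_smul_one, map_smul, smul_eq_mul, sub_nonneg] at h

section PairCover

variable {ι α β : Type*} [Fintype ι] [DecidableEq α] [DecidableEq β]
  {V : ι → Finset (α ⊕ β)} {g : ι → α × β}

theorem filter_inl_mem_and_inr_mem_eq (hV : ∀ k, V k = {Sum.inl (g k).1, Sum.inr (g k).2})
    (a : α) (b : β) :
    univ.filter (fun k => Sum.inl a ∈ V k ∧ Sum.inr b ∈ V k) = univ.filter (g · = (a, b)) := by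
  ext k
  simp [hV, Prod.ext_iff, eq_comm]

theorem forall_adj_completeBipartiteGraph_filter_iff
    (hV : ∀ k, V k = {Sum.inl (g k).1, Sum.inr (g k).2}) (P : Finset ι → Prop) :
    (∀ u v, (completeBipartiteGraph α β).Adj u v → P (univ.filter fun k => u ∈ V k ∧ v ∈ V k)) ↔
      ∀ c, P (univ.filter (g · = c)) := by
  constructor
  · rintro h ⟨a, b⟩
    rw [← filter_inl_mem_and_inr_mem_eq hV]
    exact h _ _ (by simp)
  · rintro h (a | b) (a' | b') hadj
    · simp at hadj
    · rw [filter_inl_mem_and_inr_mem_eq hV]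
      exact h _
    · rw [filter_congr fun _ _ => and_comm, filter_inl_mem_and_inr_mem_eq hV]
      exact h _
    · simp at hadj

theorem card_le_sum_map_one_of_pair_cover [Fintype α] [Fintype β]
    (hV : ∀ k, V k = {Sum.inl (g k).1, Sum.inr (g k).2})
    (L : ι → MvPolynomial (α ⊕ β) ℝ →ₗ[ℝ] ℝ)
    (hsum : ∀ a b, ∑ k ∈ univ.filter (fun k => Sum.inl a ∈ V k ∧ Sum.inr b ∈ V k),
      L k (X (Sum.inl a) * X (Sum.inr b)) = 1)
    (hloc : ∀ k a b, Sum.inl a ∈ V k → Sum.inr b ∈ V k →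
      0 ≤ L k (C 1 - X (Sum.inl a) * X (Sum.inr b))) :
    (Fintype.card (α × β) : ℝ) ≤ ∑ k, L k 1 := by
  refine card_le_sum_of_one_le_sum_fiber g fun ⟨a, b⟩ => ?_
  rw [← filter_inl_mem_and_inr_mem_eq hV, ← hsum a b]
  refine sum_le_sum fun k hk => ?_
  obtain ⟨ha, hb⟩ := (mem_filter.1 hk).2
  simpa using MvPolynomial.linearMap_le_mul_map_one_of_map_C_sub_nonneg (L k) (hloc k a b ha hb)

end PairCover

/-- For `n = 2m` and `A = [[(m+1)Iₘ, Jₘ],[Jₘ, (m+1)Iₘ]]`: the support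
graph `G_A` is the complete bipartite graph `K_{m,m}`, whose maximal cliques are its `m²`
edges; `c_frac(G_A) = m²`; and consequently `ξ^{cp,wisp}_1(A) ≥ m²`. -/
theorem bipartite_example_sparse_bound
    (m p : ℕ) (hm : 1 ≤ m)
    (A : Matrix (Fin m ⊕ Fin m) (Fin m ⊕ Fin m) ℝ)
    (hA : A = fromBlocks (((m : ℝ) + 1) • 1) (of fun _ _ => 1)
      (of fun _ _ => 1) (((m : ℝ) + 1) • 1))
    (G : SimpleGraph (Fin m ⊕ Fin m))
    (hG : ∀ u v, G.Adj u v ↔ u ≠ v ∧ A u v ≠ 0)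
    (V : Fin p → Finset (Fin m ⊕ Fin m))
    (hmax : ∀ k, G.IsClique (V k : Set (Fin m ⊕ Fin m)) ∧
      ∀ S : Finset (Fin m ⊕ Fin m), G.IsClique (S : Set (Fin m ⊕ Fin m)) → V k ⊆ S → S = V k)
    (hall : ∀ S : Finset (Fin m ⊕ Fin m),
      (G.IsClique (S : Set (Fin m ⊕ Fin m)) ∧
        ∀ S' : Finset (Fin m ⊕ Fin m), G.IsClique (S' : Set (Fin m ⊕ Fin m)) → S ⊆ S' → S' = S) →
      ∃ k, V k = S) :
    -- `G_A` is the complete bipartite graph `K_{m,m}`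
    G = completeBipartiteGraph (Fin m) (Fin m) ∧
    -- the maximal cliques of `G_A` are exactly its `m²` edges
    (∀ S : Finset (Fin m ⊕ Fin m),
      (G.IsClique (S : Set (Fin m ⊕ Fin m)) ∧
        ∀ S' : Finset (Fin m ⊕ Fin m), G.IsClique (S' : Set (Fin m ⊕ Fin m)) → S ⊆ S' → S' = S)
      ↔ ∃ (i j : Fin m), S = {Sum.inl i, Sum.inr j}) ∧
    -- `c_frac(G_A) = m²`
    sInf {v : EReal | ∃ x : Fin p → ℝ, (∀ k, 0 ≤ x k) ∧
        (∀ u v : Fin m ⊕ Fin m, u ≠ v → A u v ≠ 0 →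
          1 ≤ ∑ k ∈ Finset.univ.filter (fun k => u ∈ V k ∧ v ∈ V k), x k) ∧
        v = ((∑ k, x k : ℝ) : EReal)}
      = (((m : ℝ) ^ 2 : ℝ) : EReal) ∧
    -- `ξ^{cp,wisp}_1(A) ≥ m²`
    (((m : ℝ) ^ 2 : ℝ) : EReal)
      ≤ sInf {v : EReal | ∃ L : Fin p → (MvPolynomial (Fin m ⊕ Fin m) ℝ →ₗ[ℝ] ℝ),
        (∀ u v : Fin m ⊕ Fin m, ∑ k ∈ Finset.univ.filter (fun k => u ∈ V k ∧ v ∈ V k),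
          L k (X u * X v) = A u v) ∧
        (∀ k, ∀ q : MvPolynomial (Fin m ⊕ Fin m) ℝ, q.totalDegree ≤ 1 → q.vars ⊆ V k →
          0 ≤ L k (q * q)) ∧
        (∀ k, ∀ u ∈ V k, 0 ≤ L k (C (Real.sqrt (A u u)) * X u - X u ^ 2)) ∧
        (∀ k, ∀ u ∈ V k, ∀ v ∈ V k, u ≠ v → 0 ≤ L k (C (A u v) - X u * X v)) ∧
        (∀ k, Matrix.PosSemidef (Matrix.of (fun u v : ↥(V k) =>
          L k 1 * A (u : Fin m ⊕ Fin m) (v : Fin m ⊕ Fin m)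
            - L k (X (u : Fin m ⊕ Fin m) * X (v : Fin m ⊕ Fin m))))) ∧
        v = ((∑ k, L k 1 : ℝ) : EReal)} := by
  have : Nonempty (Fin m) := ⟨⟨0, hm⟩⟩
  obtain rfl : G = completeBipartiteGraph (Fin m) (Fin m) := by
    ext u v
    rw [hG, hA, SimpleGraph.completeBipartiteGraph_adj_iff_fromBlocks_ne_zero ((m : ℝ) + 1)]
  have hcliques : ∀ S : Finset (Fin m ⊕ Fin m),
      ((completeBipartiteGraph (Fin m) (Fin m)).IsClique (S : Set (Fin m ⊕ Fin m)) ∧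
        ∀ S' : Finset (Fin m ⊕ Fin m),
          (completeBipartiteGraph (Fin m) (Fin m)).IsClique (S' : Set (Fin m ⊕ Fin m)) →
            S ⊆ S' → S' = S) ↔ ∃ i j, S = {Sum.inl i, Sum.inr j} := fun S => by
    rw [← SimpleGraph.maximal_isClique_completeBipartiteGraph_iff, maximal_iff]
    simp only [eq_comm (a := S)]
  choose a b hab using fun k => (hcliques (V k)).1 (hmax k)
  set g : Fin p → Fin m × Fin m := fun k => (a k, b k)
  have hV : ∀ k, V k = {Sum.inl (g k).1, Sum.inr (g k).2} := hab
  have hg : Surjective g := fun ⟨i, j⟩ => by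
    obtain ⟨k, hk⟩ := hall _ ((hcliques _).2 ⟨i, j, rfl⟩)
    obtain ⟨hi, hj⟩ := pair_inl_inr_subset_pair_iff.1 ((hab k).symm.trans hk).le
    exact ⟨k, Prod.ext hi hj⟩
  have hcard : (m : ℝ) ^ 2 = Fintype.card (Fin m × Fin m) := by simp [sq]
  refine ⟨rfl, hcliques, ?_, ?_⟩
  · rw [hcard, ← sInf_fiber_cover_eq_card hg]
    congr! 5 with v x
    rw [← forall_adj_completeBipartiteGraph_filter_iff hV (fun s => 1 ≤ ∑ k ∈ s, x k)]
    simp only [hG, and_imp]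
  · refine le_sInf ?_
    rintro _ ⟨L, hsum, -, -, hoff, -, rfl⟩
    have hA1 : ∀ i j, A (Sum.inl i) (Sum.inr j) = 1 := by simp [hA]
    rw [hcard, EReal.coe_le_coe_iff]
    exact card_le_sum_map_one_of_pair_cover hV L (fun i j => by rw [hsum, hA1])
      fun k i j hi hj => hA1 i j ▸ hoff k _ hi _ hj Sum.inl_ne_inr
end

section
/- For every n ≥ 4, the (2n+1)×(2n+1) block matrix [[8(n−2)/n, (2(n−2)/n)·𝟙ᵀ, (2(n−2)/n)·𝟙ᵀ],[(2(n−2)/n)·𝟙, I_n + ((n−4)/n)·J_n, I_n],[(2(n−2)/n)·𝟙, I_n, I_n + ((n−4)/n)·J_n]] is positive semidefinite, where 𝟙 ∈ ℝⁿ is the all-ones vector, I_n the n×n identity matrix, and J_n the n×n all-ones matrix. -/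
/-!
Writing a vector as `(a, x, y)` with `x, y ∈ ℝⁿ`, `X = ∑ xᵢ` and `Y = ∑ yᵢ`, the quadratic form of
the matrix is
`(‖x + y‖² - (X + Y)² / n) + (n - 4) / (2n) · (X - Y)² + (n - 2) / (2n) · (4a + X + Y)²`.
The first term is the squared norm of the centred vector `x + y - ((X + Y) / n) 𝟙`, and the
other two are squares with nonnegative coefficients once `n ≥ 4`. At the level of matrices this is
a decomposition into a Gram matrix and two nonnegative multiples of rank-one matrices `v vᵀ`.
-/

open Matrix

/-- The linear map `(a, x, y) ↦ x + y - ((∑ xᵢ + ∑ yᵢ) / n) 𝟙`. -/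
noncomputable def centeredPairSum (n : ℕ) : Matrix (Fin n) (Option (Fin n ⊕ Fin n)) ℝ :=
  let centered (i j : Fin n) : ℝ := (if j = i then 1 else 0) - 1 / n
  of fun i p => p.elim 0 (Sum.elim (centered i) (centered i))

def pairDifference (n : ℕ) : Option (Fin n ⊕ Fin n) → ℝ :=
  fun p => p.elim 0 (Sum.elim 1 (-1))

def weightedTotal (n : ℕ) : Option (Fin n ⊕ Fin n) → ℝ :=
  fun p => p.elim 4 1

theorem Matrix.posSemidef_vecMulVec_self {ι R : Type*} [Fintype ι] [CommRing R] [PartialOrder R]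
    [StarRing R] [TrivialStar R] [StarOrderedRing R] (v : ι → R) :
    (vecMulVec v v).PosSemidef := by
  simpa using posSemidef_vecMulVec_self_star v

theorem posSemidef_gram_add_rankOne (n : ℕ) (hn : 4 ≤ n) :
    ((centeredPairSum n)ᴴ * centeredPairSum n
      + (((n : ℝ) - 4) / (2 * n)) • vecMulVec (pairDifference n) (pairDifference n)
      + (((n : ℝ) - 2) / (2 * n)) • vecMulVec (weightedTotal n) (weightedTotal n)).PosSemidef := by
  have hn4 : (4 : ℝ) ≤ n := by exact_mod_cast hn
  refine ((posSemidef_conjTranspose_mul_self _).add ((posSemidef_vecMulVec_self _).smul ?_)).add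
    ((posSemidef_vecMulVec_self _).smul ?_) <;>
  exact div_nonneg (by linarith) (by positivity)

/-- For every `n ≥ 4`, the `(2n+1)×(2n+1)` block matrix
`[[8(n−2)/n, (2(n−2)/n)𝟙ᵀ, (2(n−2)/n)𝟙ᵀ],
  [(2(n−2)/n)𝟙, Iₙ + ((n−4)/n)Jₙ, Iₙ],
  [(2(n−2)/n)𝟙, Iₙ, Iₙ + ((n−4)/n)Jₙ]]`
is positive semidefinite. -/
theorem moment_matrix_for_identity_posSemidef
    (n : ℕ) (hn : 4 ≤ n) :
    Matrix.PosSemidef (Matrix.of (fun i j =>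
        match i, j with
        | none, none => 8 * ((n : ℝ) - 2) / n
        | none, some _ => 2 * ((n : ℝ) - 2) / n
        | some _, none => 2 * ((n : ℝ) - 2) / n
        | some (Sum.inl i), some (Sum.inl j) =>
            (if i = j then (1 : ℝ) else 0) + ((n : ℝ) - 4) / n
        | some (Sum.inr i), some (Sum.inr j) =>
            (if i = j then (1 : ℝ) else 0) + ((n : ℝ) - 4) / n
        | some (Sum.inl i), some (Sum.inr j) => if i = j then (1 : ℝ) else 0
        | some (Sum.inr i), some (Sum.inl j) => if i = j then (1 : ℝ) else 0) :
      Matrix (Option (Fin n ⊕ Fin n)) (Option (Fin n ⊕ Fin n)) ℝ) := by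
  have hn0 : (n : ℝ) ≠ 0 := by positivity
  convert posSemidef_gram_add_rankOne n hn using 1
  ext (_ | i | i) (_ | j | j) <;>
    simp [centeredPairSum, pairDifference, weightedTotal, mul_apply, vecMulVec_apply,
      sub_mul, mul_sub, Finset.sum_sub_distrib] <;>
    field_simp <;> ring_nf
end
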